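/- arXiv:2205.06004 — 11 statements merged into one kernel-verified Lean document; each statement's English description precedes it below -/
import Mathlib

section
/- For every integer n ≥ 3, every realizable multiset is admissible: if M is the associated multiset of some path on n equally spaced points, then for every divisor d of n, Σ_{j=1}^{⌊m/d⌋} ℓ_{jd} ≤ n−d, where ℓ_j is the multiplicity of j in M. -/
/-- The type of the chord joining points `i` and `j` (both `< n`) among `n`
equally spaced points on a circle: `min (|i-j| mod n) (n - |i-j| mod n)`. -/
def chordType (n i j : ℕ) : ℕ :=
  min ((i + n - j) % n) (n - (i + n - j) % n)

/-- The associated multiset of chord types of the path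
`p 0, p 1, …, p (n-1)`. -/
def pathMultiset (n : ℕ) (p : ℕ → ℕ) : Multiset ℕ :=
  (Multiset.range (n - 1)).map fun i => chordType n (p i) (p (i + 1))

/-- `p` is a path on `n` points: it enumerates `{0,…,n-1}` bijectively. -/
def IsPath (n : ℕ) (p : ℕ → ℕ) : Prop :=
  Set.BijOn p (Set.Iio n) (Set.Iio n)

lemma chord_mod {n d i j : ℕ} (hd : d ∣ n) (hn : 0 < n) (hj : j < n)
    (h : d ∣ chordType n i j) : i % d = j % d := by
  set a := (i + n - j) % n with ha
  have haln : a ≤ n := le_of_lt (Nat.mod_lt _ hn)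
  have hda : d ∣ a := by
    rcases le_total a (n - a) with hle | hle
    · rwa [chordType, min_eq_left hle] at h
    · rw [chordType, min_eq_right hle] at h
      have : a = n - (n - a) := by omega
      rw [this]
      exact Nat.dvd_sub hd h
  have hdin : d ∣ (i + n - j) := (Nat.dvd_mod_iff hd).mp hda
  have hjle : j ≤ i + n := by omega
  have h1 : j ≡ i + n [MOD d] := (Nat.modEq_iff_dvd' hjle).mpr hdin
  have h2 : i + n ≡ i + 0 [MOD d] :=
    Nat.ModEq.add_left i ((Nat.modEq_zero_iff_dvd).mpr hd)
  have := h1.trans h2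
  simpa [Nat.ModEq] using this.symm

lemma same_class_edges_le (n d : ℕ) (hn : 0 < n) (hd : 0 < d) (hdn : d ≤ n)
    (q : ℕ → ℕ) (hq0 : q 0 < d) (hq : ∀ r < d, ∃ i < n, q i = r) :
    ((Finset.range (n - 1)).filter (fun i => q i = q (i + 1))).card ≤ n - d := by
  classical
  set C := (Finset.range (n - 1)).filter (fun i => ¬ q i = q (i + 1)) with hC
  have hsplit := Finset.card_filter_add_card_filter_not
    (s := Finset.range (n - 1)) (p := fun i => q i = q (i + 1))
  have hCeq : (Finset.filter (fun a => ¬ q a = q (a + 1)) (Finset.range (n - 1))).card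
      = C.card := by rw [hC]
  have hcard : d - 1 ≤ C.card := by
    have hinj : ∀ r ∈ (Finset.range d).erase (q 0),
        (sInf {i | q i = r} - 1) ∈ C := by
      intro r hr
      obtain ⟨hne, hrd⟩ := Finset.mem_erase.mp hr
      have hrd' : r < d := Finset.mem_range.mp hrd
      obtain ⟨i, hi, hqi⟩ := hq r hrd'
      have hne' : {j | q j = r}.Nonempty := ⟨i, hqi⟩
      set N := sInf {j | q j = r} with hN
      have hmem : q N = r := Nat.sInf_mem hne'
      have hNle : N ≤ i := Nat.sInf_le (show i ∈ {j | q j = r} from hqi)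
      have hN0 : 0 < N := by
        rcases Nat.eq_zero_or_pos N with h | h
        · rw [h] at hmem; exact absurd hmem.symm hne
        · exact h
      have hprev : q (N - 1) ≠ r := by
        intro h
        have := Nat.sInf_le (show (N - 1) ∈ {j | q j = r} from h)
        omega
      simp only [hC, Finset.mem_filter, Finset.mem_range]
      constructor
      · omega
      · intro h
        have h' : N - 1 + 1 = N := by omega
        rw [h'] at h
        exact hprev (h.trans hmem)
    have hinj2 : Set.InjOn (fun r => sInf {i | q i = r} - 1)
        ((Finset.range d).erase (q 0)) := by
      intro r hr r' hr' heq
      obtain ⟨hne, hrd⟩ := Finset.mem_erase.mp hr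
      obtain ⟨hne', hrd'⟩ := Finset.mem_erase.mp hr'
      obtain ⟨i, hi, hqi⟩ := hq r (Finset.mem_range.mp hrd)
      obtain ⟨i', hi', hqi'⟩ := hq r' (Finset.mem_range.mp hrd')
      have h1 : q (sInf {j | q j = r}) = r := Nat.sInf_mem (⟨i, hqi⟩ : {j | q j = r}.Nonempty)
      have h2 : q (sInf {j | q j = r'}) = r' := Nat.sInf_mem (⟨i', hqi'⟩ : {j | q j = r'}.Nonempty)
      have hp1 : 0 < sInf {j | q j = r} := by
        rcases Nat.eq_zero_or_pos (sInf {j | q j = r}) with h | h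
        · rw [h] at h1; exact absurd h1.symm hne
        · exact h
      have hp2 : 0 < sInf {j | q j = r'} := by
        rcases Nat.eq_zero_or_pos (sInf {j | q j = r'}) with h | h
        · rw [h] at h2; exact absurd h2.symm hne'
        · exact h
      have heq' : sInf {j | q j = r} = sInf {j | q j = r'} := by
        simp only at heq; omega
      rw [← h1, ← h2, heq']
    have := Finset.card_le_card_of_injOn _ hinj hinj2
    have hce : ((Finset.range d).erase (q 0)).card = d - 1 := by
      rw [Finset.card_erase_of_mem (Finset.mem_range.mpr hq0), Finset.card_range]
    omega
  have hrange : (Finset.range (n - 1)).card = n - 1 := Finset.card_range _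
  omega

/-- Every realizable multiset is admissible: the associated multiset of any
path satisfies, for every divisor `d` of `n`,
`∑_{j=1}^{⌊m/d⌋} ℓ_{jd} ≤ n - d` where `ℓ_t` is the multiplicity of `t`. -/
theorem realizable_is_admissible (n : ℕ) (hn : 3 ≤ n) (p : ℕ → ℕ) (hp : IsPath n p) :
    ∀ d, d ∣ n →
      ∑ j ∈ Finset.Icc 1 (n / 2 / d), (pathMultiset n p).count (j * d) ≤ n - d := by
  classical
  intro d hd
  have hn0 : 0 < n := by omega
  have hd0 : 0 < d := Nat.pos_of_dvd_of_pos hd hn0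
  have hdn : d ≤ n := Nat.le_of_dvd hn0 hd
  set f : ℕ → ℕ := fun i => chordType n (p i) (p (i + 1)) with hf
  have hcount : ∀ t, (pathMultiset n p).count t
      = ((Finset.range (n - 1)).filter (fun i => t = f i)).card := by
    intro t
    rw [pathMultiset, Multiset.count_map]
    rfl
  set A : ℕ → Finset ℕ :=
    fun j => (Finset.range (n - 1)).filter (fun i => j * d = f i) with hA
  have hsum : ∑ j ∈ Finset.Icc 1 (n / 2 / d), (pathMultiset n p).count (j * d)
      = ((Finset.Icc 1 (n / 2 / d)).biUnion A).card := by
    rw [Finset.card_biUnion]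
    · exact Finset.sum_congr rfl fun j _ => hcount (j * d)
    · intro j hj k hk hjk
      simp only [hA, Finset.disjoint_left, Finset.mem_filter]
      rintro i ⟨_, h1⟩ ⟨_, h2⟩
      exact hjk (Nat.eq_of_mul_eq_mul_right hd0 (h1.trans h2.symm))
  rw [hsum]
  have hsub : (Finset.Icc 1 (n / 2 / d)).biUnion A ⊆
      (Finset.range (n - 1)).filter (fun i => p i % d = p (i + 1) % d) := by
    intro i hi
    simp only [Finset.mem_biUnion, hA, Finset.mem_filter] at hi
    obtain ⟨j, hj, hir, hfe⟩ := hi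
    refine Finset.mem_filter.mpr ⟨hir, ?_⟩
    have hir' : i < n - 1 := Finset.mem_range.mp hir
    have hi1 : p (i + 1) < n := hp.mapsTo (show (i + 1) ∈ Set.Iio n by
      simp only [Set.mem_Iio]; omega)
    exact chord_mod hd hn0 hi1 (show d ∣ f i from hfe ▸ dvd_mul_left d j)
  calc ((Finset.Icc 1 (n / 2 / d)).biUnion A).card
      ≤ ((Finset.range (n - 1)).filter (fun i => p i % d = p (i + 1) % d)).card :=
        Finset.card_le_card hsub
    _ ≤ n - d := by
        apply same_class_edges_le n d hn0 hd0 hdn (fun i => p i % d)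
        · exact Nat.mod_lt _ hd0
        · intro r hr
          have hrn : (r : ℕ) ∈ Set.Iio n := by simp only [Set.mem_Iio]; omega
          obtain ⟨i, hi, hpi⟩ := hp.surjOn hrn
          exact ⟨i, hi, by rw [hpi, Nat.mod_eq_of_lt hr]⟩
end

section
/- Let n ≥ 3 and let k be an integer coprime to n. For a multiset M of elements of {1,…,⌊n/2⌋}, let kM denote the multiset {{ min(kℓ mod n, n − (kℓ mod n)) : ℓ ∈ M }} (with multiplicity). Then kM is realizable if and only if M is realizable. -/
/-- A multiset of chord types is realizable if it is the associated multiset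
of some path on `n` points. -/
def Realizable (n : ℕ) (M : Multiset ℕ) : Prop :=
  ∃ p : ℕ → ℕ, IsPath n p ∧ pathMultiset n p = M

/-! Multiplication by a unit `u` of `ZMod n` permutes the `n` points and sends a chord of type
`ℓ` to one of type `|u ℓ|` (a chord of type `ℓ` joins points differing by `±ℓ`), so it carries
realizable multisets to realizable ones. Multiplying afterwards by `u⁻¹` returns every type
`ℓ ≤ n / 2` to itself, which gives the converse. -/

open Set

namespace ZMod

variable {n : ℕ}

lemma natAbs_valMinAbs_mul_natCast_natAbs_valMinAbs [NeZero n] (c a : ZMod n) :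
    (c * (a.valMinAbs.natAbs : ZMod n)).valMinAbs.natAbs = (c * a).valMinAbs.natAbs := by
  rw [natCast_natAbs_valMinAbs]
  split_ifs
  · rfl
  · rw [mul_neg, natAbs_valMinAbs_neg]

lemma bijOn_val_unit_mul_natCast [NeZero n] (u : (ZMod n)ˣ) :
    BijOn (fun x : ℕ => ((u : ZMod n) * x).val) (Iio n) (Iio n) := by
  have leftInvOn : ∀ v : (ZMod n)ˣ,
      LeftInvOn (fun x : ℕ => ((v⁻¹ : (ZMod n)ˣ) * x : ZMod n).val)
        (fun x : ℕ => ((v : ZMod n) * x).val) (Iio n) := fun v x (hx : x < n) => by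
    simp only [natCast_zmod_val, Units.inv_mul_cancel_left, val_cast_of_lt hx]
  refine InvOn.bijOn ⟨leftInvOn u, by simpa using leftInvOn u⁻¹⟩ ?_ ?_ <;>
    exact fun _ _ => val_lt _

end ZMod

open ZMod

lemma chordType_eq_natAbs_valMinAbs {n : ℕ} [NeZero n] (a : ℕ) {b : ℕ} (hb : b ≤ n) :
    chordType n a b = ((a : ZMod n) - b).valMinAbs.natAbs := by
  rw [chordType, valMinAbs_natAbs_eq_min, ← val_natCast, Nat.cast_sub (by omega)]
  simp

def chordMul {n : ℕ} (c : ZMod n) (ℓ : ℕ) : ℕ :=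
  (c * ℓ).valMinAbs.natAbs

lemma chordMul_natCast_eq_min (n k ℓ : ℕ) [NeZero n] :
    chordMul (k : ZMod n) ℓ = min ((k * ℓ) % n) (n - (k * ℓ) % n) := by
  rw [chordMul, valMinAbs_natAbs_eq_min, ← Nat.cast_mul, val_natCast]

lemma chordMul_inv_chordMul {n ℓ : ℕ} [NeZero n] (u : (ZMod n)ˣ) (hℓ : ℓ ≤ n / 2) :
    chordMul ((u⁻¹ : (ZMod n)ˣ) : ZMod n) (chordMul (u : ZMod n) ℓ) = ℓ := by
  rw [chordMul, chordMul, natAbs_valMinAbs_mul_natCast_natAbs_valMinAbs,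
    Units.inv_mul_cancel_left, valMinAbs_natCast_of_le_half hℓ, Int.natAbs_natCast]

lemma pathMultiset_val_mul {n : ℕ} [NeZero n] (c : ZMod n) {p : ℕ → ℕ}
    (hp : MapsTo p (Iio n) (Iio n)) :
    pathMultiset n (fun i => (c * p i).val) = (pathMultiset n p).map (chordMul c) := by
  rw [pathMultiset, pathMultiset, Multiset.map_map]
  refine Multiset.map_congr rfl fun i hi_mem => ?_
  have hi : i + 1 < n := by
    rw [Multiset.mem_range] at hi_mem
    omega
  rw [Function.comp_apply, chordType_eq_natAbs_valMinAbs _ (val_lt _).le,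
    chordType_eq_natAbs_valMinAbs _ (hp hi).le, chordMul,
    natAbs_valMinAbs_mul_natCast_natAbs_valMinAbs, natCast_zmod_val, natCast_zmod_val, mul_sub]

lemma Realizable.map_chordMul {n : ℕ} [NeZero n] {M : Multiset ℕ} (u : (ZMod n)ˣ)
    (h : Realizable n M) : Realizable n (M.map (chordMul (u : ZMod n))) := by
  obtain ⟨p, hp, rfl⟩ := h
  exact ⟨_, (bijOn_val_unit_mul_natCast u).comp hp, pathMultiset_val_mul _ hp.mapsTo⟩

/-- For `k` coprime to `n`, the multiset
`kM = {{ min (kℓ mod n) (n - kℓ mod n) : ℓ ∈ M }}` is realizable if and only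
if `M` is realizable. -/
theorem realizable_coprime_mul_iff (n k : ℕ) (hn : 3 ≤ n) (hk : Nat.Coprime k n)
    (M : Multiset ℕ) (hM : ∀ x ∈ M, 1 ≤ x ∧ x ≤ n / 2) :
    Realizable n (M.map fun ℓ => min ((k * ℓ) % n) (n - (k * ℓ) % n)) ↔
      Realizable n M := by
  have : NeZero n := ⟨by omega⟩
  set u := unitOfCoprime k hk
  have hmul : (fun ℓ => min ((k * ℓ) % n) (n - (k * ℓ) % n)) = chordMul (u : ZMod n) := by
    ext ℓ
    rw [coe_unitOfCoprime, chordMul_natCast_eq_min]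
  have hinv :
      (M.map (chordMul (u : ZMod n))).map (chordMul ((u⁻¹ : (ZMod n)ˣ) : ZMod n)) = M := by
    rw [Multiset.map_map]
    exact (Multiset.map_congr rfl fun ℓ hℓ => chordMul_inv_chordMul u (hM ℓ hℓ).2).trans
      M.map_id'
  rw [hmul]
  exact ⟨fun h => hinv ▸ h.map_chordMul u⁻¹, Realizable.map_chordMul u⟩
end

section
/- For every integer n ≥ 2, the ℚ-vector space of identities, i.e. of tuples (a_1,…,a_m) ∈ ℚ^m with Σ_{j=1}^m a_j sin(jπ/n) = 0 and Σ_{j=1}^m a_j = 0, has dimension max{0, m − φ(2n)/2 − 1}, where m = ⌊n/2⌋ and φ is Euler's totient function. -/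
/-- The `ℚ`-linear map sending `(a_1,…,a_m)` (with `m = ⌊n/2⌋`) to
`∑_{j=1}^m a_j • sin (jπ/n) : ℝ`. -/
noncomputable def sinSum (n : ℕ) : (Fin (n / 2) → ℚ) →ₗ[ℚ] ℝ :=
  ∑ j : Fin (n / 2),
    (LinearMap.proj j : (Fin (n / 2) → ℚ) →ₗ[ℚ] ℚ).smulRight
      (Real.sin ((j.1 + 1) * Real.pi / n))

/-- The `ℚ`-linear map sending `(a_1,…,a_m)` to `∑_{j=1}^m a_j`. -/
def coordSum (n : ℕ) : (Fin (n / 2) → ℚ) →ₗ[ℚ] ℚ :=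
  ∑ j : Fin (n / 2), (LinearMap.proj j : (Fin (n / 2) → ℚ) →ₗ[ℚ] ℚ)

/-!
Every `sin (tπ/n)` is `0` or `± sin (jπ/n)` for some `1 ≤ j ≤ m`, so the `ℚ`-span of the sines
is the image of the imaginary part on `ℚ(ζ)`, `ζ = exp (πi/n)` a primitive `2n`-th root of unity.
The kernel of `Im` on `ℚ(ζ)` is the fixed field of complex conjugation, of index `2`, so the span
has dimension `φ(2n)/2` and the first equation alone cuts out a space of dimension
`m - φ(2n)/2`.

If `n` is an odd prime or a power of `2`, then `m = φ(2n)/2` and that space is already zero.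
Otherwise `n = pq` with `p > 1` odd and `q ≥ 2`; folding the relation
`∑_{k<p} sin (π/n + 2πk/p) = 0` back onto the indices `1, …, m` gives an element of that space
whose coordinate sum is a sum of `p` signs, hence odd and nonzero, so the second equation cuts
the dimension by exactly one.
-/

open Real Module Finset IntermediateField ComplexConjugate Polynomial Nat
open Complex (I conjAe)

lemma Submodule.finrank_inf_ker_add_one {K V : Type*} [Field K] [AddCommGroup V] [Module K V]
    [FiniteDimensional K V] {W : Submodule K V} {f : Module.Dual K V} (h : ∃ a ∈ W, f a ≠ 0) :
    finrank K ↥(W ⊓ LinearMap.ker f) + 1 = finrank K W := by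
  obtain ⟨a, ha, hfa⟩ := h
  have hne : f ∘ₗ W.subtype ≠ 0 := fun h₀ ↦ hfa (LinearMap.congr_fun h₀ ⟨a, ha⟩)
  rw [← map_comap_subtype, finrank_map_subtype_eq, ← LinearMap.ker_comp]
  exact Module.Dual.finrank_ker_add_one_of_ne_zero hne

lemma sum_units_ne_zero_of_odd_card {ι : Type*} {s : Finset ι} (ε : ι → ℤˣ)
    (hs : Odd s.card) : ∑ i ∈ s, (ε i : ℤ) ≠ 0 := by
  intro h
  have hmod := congrArg (Int.cast : ℤ → ZMod 2) h
  have hε : ∀ i, ((ε i : ℤ) : ZMod 2) = 1 := fun i ↦ by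
    rcases Int.units_eq_one_or (ε i) with hu | hu <;> simp [hu]
  rw [Int.cast_sum, sum_congr rfl fun i _ ↦ hε i, sum_const, nsmul_one,
    (ZMod.natCast_eq_one_iff_odd).2 hs] at hmod
  exact one_ne_zero hmod

lemma sum_range_sin_add_two_pi_mul_div (θ : ℝ) {p : ℕ} (hp : 1 < p) :
    ∑ k ∈ range p, sin (θ + 2 * π * k / p) = 0 := by
  have hζ := Complex.isPrimitiveRoot_exp p (by omega)
  have hterm : ∀ k : ℕ, sin (θ + 2 * π * k / p) =
      (Complex.exp (θ * I) * Complex.exp (2 * π * I / p) ^ k).im := by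
    intro k
    rw [← Complex.exp_nat_mul, ← Complex.exp_add, ← Complex.exp_ofReal_mul_I_im]
    push_cast
    congr 2
    ring
  simp_rw [hterm, ← Complex.im_sum, ← mul_sum, hζ.geom_sum_eq_zero hp, mul_zero,
    Complex.zero_im]

lemma sinSum_apply (n : ℕ) (a : Fin (n / 2) → ℚ) :
    sinSum n a = ∑ j, a j • sin ((j + 1) * π / n) := by
  simp [sinSum]

lemma coordSum_apply (n : ℕ) (a : Fin (n / 2) → ℚ) : coordSum n a = ∑ j, a j := by
  simp [coordSum]

lemma sinSum_single (n : ℕ) (j : Fin (n / 2)) (c : ℚ) :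
    sinSum n (Pi.single j c) = c • sin ((j + 1) * π / n) := by
  simp [sinSum_apply, Pi.single_apply]

lemma coordSum_single (n : ℕ) (j : Fin (n / 2)) (c : ℚ) : coordSum n (Pi.single j c) = c := by
  simp [coordSum_apply]

lemma exists_sin_eq_sin_succ_mul_pi_div {n r : ℕ} (hr₀ : 0 < r) (hrn : r < n) :
    ∃ j : Fin (n / 2), sin (r * π / n) = sin ((j + 1) * π / n) := by
  by_cases hr : r ≤ n / 2
  · exact ⟨⟨r - 1, by omega⟩, by push_cast [Nat.cast_sub hr₀]; ring_nf⟩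
  · refine ⟨⟨n - r - 1, by omega⟩, ?_⟩
    have hn : (n : ℝ) ≠ 0 := by exact_mod_cast (by omega : n ≠ 0)
    rw [← sin_pi_sub]
    congr 1
    push_cast [Nat.cast_sub (by omega : 1 ≤ n - r), Nat.cast_sub hrn.le]
    field_simp
    ring

lemma exists_sin_eq_unit_mul_sin_succ_mul_pi_div {n t : ℕ} (hn : 0 < n) (ht : ¬n ∣ t) :
    ∃ (j : Fin (n / 2)) (ε : ℤˣ), sin (t * π / n) = (ε : ℤ) * sin ((j + 1) * π / n) := by
  obtain ⟨j, hj⟩ := exists_sin_eq_sin_succ_mul_pi_div (n := n) (r := t % n)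
    (Nat.pos_of_ne_zero fun h ↦ ht (Nat.dvd_of_mod_eq_zero h)) (Nat.mod_lt t hn)
  refine ⟨j, (-1) ^ (t / n), ?_⟩
  have hsplit : t * π / n = (t % n : ℕ) * π / n + (t / n : ℕ) * π := by
    have hn' : (n : ℝ) ≠ 0 := by positivity
    conv_lhs => rw [← Nat.mod_add_div t n]
    push_cast
    field_simp
  rw [hsplit, sin_add_nat_mul_pi, hj]
  push_cast
  rfl

lemma sin_mul_pi_div_mem_range_sinSum (n t : ℕ) :
    sin (t * π / n) ∈ LinearMap.range (sinSum n) := by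
  rcases Nat.eq_zero_or_pos n with rfl | hn
  · simp
  by_cases ht : n ∣ t
  · obtain ⟨k, rfl⟩ := ht
    have hn' : (n : ℝ) ≠ 0 := by positivity
    rw [show ((n * k : ℕ) : ℝ) * π / n = k * π by push_cast; field_simp, sin_nat_mul_pi]
    exact zero_mem _
  · obtain ⟨j, ε, hj⟩ := exists_sin_eq_unit_mul_sin_succ_mul_pi_div hn ht
    exact ⟨Pi.single j ((ε : ℤ) : ℚ), by rw [sinSum_single, hj]; rfl⟩

namespace IntermediateField

variable (K : IntermediateField ℚ ℂ)

noncomputable def imLm : K →ₗ[ℚ] ℝ :=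
  (Complex.imLm.restrictScalars ℚ).comp K.val.toLinearMap

@[simp]
lemma imLm_apply (x : K) : K.imLm x = (x : ℂ).im :=
  rfl

variable [Normal ℚ K]

noncomputable def conjAlgEquiv : K ≃ₐ[ℚ] K :=
  (conjAe.restrictScalars ℚ).restrictNormal K

lemma coe_conjAlgEquiv (x : K) : (K.conjAlgEquiv x : ℂ) = conj (x : ℂ) :=
  AlgEquiv.restrictNormal_commutes _ K x

lemma conjAlgEquiv_apply_eq_self_iff (x : K) : K.conjAlgEquiv x = x ↔ (x : ℂ).im = 0 := by
  rw [← Complex.conj_eq_iff_im, ← coe_conjAlgEquiv, Subtype.coe_inj]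

lemma orderOf_conjAlgEquiv (h : ∃ x : K, (x : ℂ).im ≠ 0) : orderOf K.conjAlgEquiv = 2 := by
  have : Fact (Nat.Prime 2) := ⟨Nat.prime_two⟩
  refine orderOf_eq_prime ?_ ?_
  · ext x
    simp [sq, coe_conjAlgEquiv]
  · obtain ⟨x, hx⟩ := h
    intro h1
    exact hx ((K.conjAlgEquiv_apply_eq_self_iff x).1 (by rw [h1]; rfl))

lemma toSubmodule_fixedField_zpowers_conjAlgEquiv :
    Subalgebra.toSubmodule (fixedField (Subgroup.zpowers K.conjAlgEquiv)).toSubalgebra =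
      LinearMap.ker K.imLm := by
  ext x
  rw [Subalgebra.mem_toSubmodule, mem_toSubalgebra, mem_fixedField_iff, LinearMap.mem_ker,
    imLm_apply, ← conjAlgEquiv_apply_eq_self_iff]
  exact ⟨fun hx ↦ hx _ (Subgroup.mem_zpowers _),
    fun hx _ hf ↦ Subgroup.zpowers_le (H := MulAction.stabilizer _ x) |>.2 hx hf⟩

theorem two_mul_finrank_range_imLm [FiniteDimensional ℚ K] (h : ∃ x : K, (x : ℂ).im ≠ 0) :
    2 * finrank ℚ (LinearMap.range K.imLm) = finrank ℚ K := by
  set F := fixedField (Subgroup.zpowers K.conjAlgEquiv)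
  have hFK : finrank F K = 2 := by
    rw [finrank_fixedField_eq_card, Nat.card_zpowers, K.orderOf_conjAlgEquiv h]
  have hF : finrank ℚ F = finrank ℚ (LinearMap.ker K.imLm) := by
    rw [← K.toSubmodule_fixedField_zpowers_conjAlgEquiv]
    rfl
  have htower : finrank ℚ F * 2 = finrank ℚ K := hFK ▸ Module.finrank_mul_finrank ℚ F K
  have hnullity := K.imLm.finrank_range_add_finrank_ker
  omega

end IntermediateField

section Cyclotomic

variable {n : ℕ}

lemma isPrimitiveRoot_exp_pi_mul_I_div (hn : n ≠ 0) :
    IsPrimitiveRoot (Complex.exp (π * I / n)) (2 * n) := by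
  convert Complex.isPrimitiveRoot_exp (2 * n) (by omega) using 2
  push_cast
  field_simp

lemma isIntegral_exp_pi_mul_I_div [NeZero n] : IsIntegral ℚ (Complex.exp (π * I / n)) :=
  ((isPrimitiveRoot_exp_pi_mul_I_div (NeZero.ne n)).isIntegral
    (by have := NeZero.ne n; omega)).tower_top

lemma im_exp_pi_mul_I_div_pow (t : ℕ) : (Complex.exp (π * I / n) ^ t).im = sin (t * π / n) := by
  rw [← Complex.exp_nat_mul, show (t : ℂ) * (π * I / n) = ((t * π / n : ℝ) : ℂ) * I by
    push_cast; ring, Complex.exp_ofReal_mul_I_im]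

lemma isCyclotomicExtension_adjoin_exp_pi_mul_I_div [NeZero n] :
    IsCyclotomicExtension {2 * n} ℚ ℚ⟮Complex.exp (π * I / n)⟯ := by
  have := (isPrimitiveRoot_exp_pi_mul_I_div (NeZero.ne n)).adjoin_isCyclotomicExtension ℚ
  exact IsCyclotomicExtension.equiv _ ℚ _ (Subalgebra.equivOfEq _ _
    (adjoin_simple_toSubalgebra_of_isAlgebraic isIntegral_exp_pi_mul_I_div.isAlgebraic).symm)

lemma range_imLm_adjoin_exp_pi_mul_I_div [NeZero n] :
    LinearMap.range ℚ⟮Complex.exp (π * I / n)⟯.imLm = LinearMap.range (sinSum n) := by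
  let pb := adjoin.powerBasis (isIntegral_exp_pi_mul_I_div (n := n))
  apply le_antisymm
  · rw [LinearMap.range_eq_map, ← pb.basis.span_eq, Submodule.map_span_le]
    rintro _ ⟨i, rfl⟩
    rw [pb.basis_eq_pow, imLm_apply, SubmonoidClass.coe_pow, adjoin.powerBasis_gen,
      AdjoinSimple.coe_gen, im_exp_pi_mul_I_div_pow]
    exact sin_mul_pi_div_mem_range_sinSum n i
  · rintro _ ⟨a, rfl⟩
    rw [sinSum_apply]
    refine Submodule.sum_mem _ fun j _ ↦
      Submodule.smul_mem _ _ ⟨AdjoinSimple.gen ℚ _ ^ (j + 1 : ℕ), ?_⟩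
    rw [imLm_apply, SubmonoidClass.coe_pow, AdjoinSimple.coe_gen, im_exp_pi_mul_I_div_pow]
    push_cast
    rfl

theorem two_mul_finrank_range_sinSum (hn : 2 ≤ n) :
    2 * finrank ℚ (LinearMap.range (sinSum n)) = φ (2 * n) := by
  have : NeZero n := ⟨by omega⟩
  have := isCyclotomicExtension_adjoin_exp_pi_mul_I_div (n := n)
  have := IsCyclotomicExtension.isGalois {2 * n} ℚ ℚ⟮Complex.exp (π * I / n)⟯
  have := IsCyclotomicExtension.finiteDimensional {2 * n} ℚ ℚ⟮Complex.exp (π * I / n)⟯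
  rw [← range_imLm_adjoin_exp_pi_mul_I_div, two_mul_finrank_range_imLm,
    IsCyclotomicExtension.finrank (n := 2 * n) _ (cyclotomic.irreducible_rat (by omega))]
  refine ⟨AdjoinSimple.gen ℚ _, ?_⟩
  rw [AdjoinSimple.coe_gen, ← pow_one (Complex.exp _), im_exp_pi_mul_I_div_pow, Nat.cast_one,
    one_mul]
  have hn' : (1 : ℝ) < n := by exact_mod_cast hn
  exact (sin_pos_of_pos_of_lt_pi (by positivity) (div_lt_self pi_pos hn')).ne'

end Cyclotomic

lemma exists_sinSum_eq_zero_coordSum_ne_zero {p q : ℕ} (hp : Odd p) (hp₁ : 1 < p)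
    (hq : 2 ≤ q) : ∃ a, sinSum (p * q) a = 0 ∧ coordSum (p * q) a ≠ 0 := by
  have hndvd : ∀ k, ¬p * q ∣ 1 + 2 * q * k := fun k h ↦ by
    have hq₁ : q ∣ 1 := (Nat.dvd_add_left (dvd_mul_of_dvd_left (dvd_mul_left q 2) k)).1
      (dvd_of_mul_left_dvd h)
    have := Nat.le_of_dvd one_pos hq₁
    omega
  choose j ε hjε using fun k ↦
    exists_sin_eq_unit_mul_sin_succ_mul_pi_div (by positivity) (hndvd k)
  refine ⟨∑ k ∈ range p, Pi.single (j k) ((ε k : ℤ) : ℚ), ?_, ?_⟩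
  · have hangle : ∀ k : ℕ,
        ((1 + 2 * q * k : ℕ) : ℝ) * π / (p * q : ℕ) = π / (p * q : ℕ) + 2 * π * k / p := by
      intro k
      have : (q : ℝ) ≠ 0 := by positivity
      push_cast
      field_simp
    rw [map_sum, ← sum_range_sin_add_two_pi_mul_div (π / (p * q : ℕ)) hp₁]
    refine sum_congr rfl fun k _ ↦ ?_
    rw [sinSum_single, ← hangle, hjε, Rat.smul_def, Rat.cast_intCast]
  · simp only [map_sum, coordSum_single]
    exact_mod_cast sum_units_ne_zero_of_odd_card ε (by rwa [card_range])

lemma div_two_le_totient_two_mul_div_two_or_exists_odd_mul {n : ℕ} (hn : 2 ≤ n) :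
    n / 2 ≤ φ (2 * n) / 2 ∨ ∃ p q, Odd p ∧ 1 < p ∧ 2 ≤ q ∧ p * q = n := by
  obtain ⟨k, m, hm, rfl⟩ := Nat.exists_eq_two_pow_mul_odd (n := n) (by omega)
  rcases Nat.lt_or_ge 1 m with hm₁ | hm₁
  · rcases Nat.eq_zero_or_pos k with rfl | hk
    · rw [pow_zero, one_mul] at hn ⊢
      by_cases hprime : m.Prime
      · left
        rw [Nat.totient_mul (Nat.coprime_two_left.2 hm), totient_two, one_mul,
          Nat.totient_prime hprime]
        have := Nat.odd_iff.1 hm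
        omega
      · obtain ⟨a, b, ha, hb, rfl⟩ := (Nat.not_prime_iff_exists_mul_eq hn).1 hprime
        refine Or.inr ⟨a, b, hm.of_mul_left, ?_, ?_, rfl⟩
        · rcases a with _ | _ | a <;> simp_all
        · rcases b with _ | _ | b <;> simp_all
    · exact Or.inr ⟨m, 2 ^ k, hm, hm₁, Nat.le_self_pow hk.ne' 2, mul_comm _ _⟩
  · obtain rfl : m = 1 := by have := hm.pos; omega
    obtain ⟨k, rfl⟩ : ∃ k', k = k' + 1 :=
      Nat.exists_eq_succ_of_ne_zero (by rintro rfl; simp at hn)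
    left
    rw [mul_one, ← pow_succ', Nat.totient_prime_pow_succ Nat.prime_two]
    simp

/-- The `ℚ`-vector space of identities, i.e. of tuples `(a_1,…,a_m) ∈ ℚ^m`
(`m = ⌊n/2⌋`) with `∑_j a_j sin (jπ/n) = 0` and `∑_j a_j = 0`, has dimension
`max 0 (m - φ(2n)/2 - 1)`. -/
theorem identity_space_dimension (n : ℕ) (hn : 2 ≤ n) :
    ((Module.finrank ℚ
        ↥(LinearMap.ker (sinSum n) ⊓ LinearMap.ker (coordSum n))) : ℤ) =
      max 0 (((n / 2 : ℕ) : ℤ) - ((Nat.totient (2 * n) : ℤ) / 2) - 1) := by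
  have hrank := two_mul_finrank_range_sinSum hn
  have hnullity := (sinSum n).finrank_range_add_finrank_ker
  rw [Module.finrank_fin_fun] at hnullity
  rcases div_two_le_totient_two_mul_div_two_or_exists_odd_mul hn with
    hle | ⟨p, q, hp, hp₁, hq, rfl⟩
  · have hker : finrank ℚ ↥(LinearMap.ker (sinSum n) ⊓ LinearMap.ker (coordSum n)) ≤
        finrank ℚ (LinearMap.ker (sinSum n)) :=
      Submodule.finrank_mono inf_le_left
    omega
  · obtain ⟨a, ha, hsum⟩ := exists_sinSum_eq_zero_coordSum_ne_zero hp hp₁ hq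
    have hdrop :=
      Submodule.finrank_inf_ker_add_one (W := LinearMap.ker (sinSum (p * q))) ⟨a, ha, hsum⟩
    omega
end

section
/- For every integer n ≥ 2, the ℚ-vector space of tuples (a_1,…,a_m) ∈ ℚ^m (m = ⌊n/2⌋) satisfying only Σ_{j=1}^m a_j sin(jπ/n) = 0 has dimension m − φ(2n)/2, where φ is Euler's totient function. -/
/-!
Let `ζ = exp (π i / n)`, a primitive `2n`-th root of unity, so that `ℚ(ζ)` has degree `φ(2n)`.
Multiplication by `i` identifies the `ℚ`-span of the `sin (jπ/n)` with the part of `ℚ(ζ)` that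
complex conjugation negates: such an `x` equals `i · Im x`, and `Im ζ^k = sin (kπ/n)`, which
periodicity and `sin (π - t) = sin t` reduce to `± sin (jπ/n)` with `j ≤ n/2`. Multiplication by
the nonzero element `ζ - ζ̄`, which conjugation negates, exchanges the conjugation-fixed and
conjugation-negated parts of `ℚ(ζ)`, so each has dimension `φ(2n)/2`; rank–nullity finishes.
-/

open Complex ComplexConjugate Module Module.End Submodule Real

section Involution

variable {F M : Type*} [Field F] [AddCommGroup M] [Module F M]

theorem finrank_eq_of_injective_of_map_le {f : M →ₗ[F] M} (hf : Function.Injective f)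
    {A B : Submodule F M} [FiniteDimensional F A] [FiniteDimensional F B]
    (hAB : A.map f ≤ B) (hBA : B.map f ≤ A) : finrank F A = finrank F B := by
  have hA := (equivMapOfInjective f hf A).finrank_eq
  have hB := (equivMapOfInjective f hf B).finrank_eq
  have := finrank_mono hAB
  have := finrank_mono hBA
  omega

theorem finrank_inf_eigenspace_one_add_finrank_inf_eigenspace_neg_one {σ : End F M}
    (hσ : Function.Involutive σ) (h2 : (2 : F) ≠ 0) {K : Submodule F M} [FiniteDimensional F K]
    (hK : K.map σ ≤ K) :
    finrank F ↥(K ⊓ eigenspace σ 1) + finrank F ↥(K ⊓ eigenspace σ (-1)) = finrank F K := by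
  have hσK {x : M} (hx : x ∈ K) : σ x ∈ K := hK (mem_map_of_mem hx)
  have hdisjoint : (K ⊓ eigenspace σ 1) ⊓ (K ⊓ eigenspace σ (-1)) = ⊥ := by
    refine eq_bot_iff.mpr fun x ⟨⟨_, hx₁⟩, ⟨_, hx₂⟩⟩ => ?_
    rw [SetLike.mem_coe, mem_eigenspace_iff] at hx₁ hx₂
    have hx : x = -x := by simpa using hx₁.symm.trans hx₂
    have : (2 : F) • x = 0 := by rw [two_smul]; nth_rw 2 [hx]; exact add_neg_cancel x
    exact (smul_eq_zero.mp this).resolve_left h2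
  have hspan : (K ⊓ eigenspace σ 1) ⊔ (K ⊓ eigenspace σ (-1)) = K := by
    refine le_antisymm (sup_le inf_le_left inf_le_left) fun x hx => ?_
    have hsplit : x = (2⁻¹ : F) • (x + σ x) + (2⁻¹ : F) • (x - σ x) := by
      rw [← smul_add, add_add_sub_cancel, ← two_smul F, smul_smul, inv_mul_cancel₀ h2, one_smul]
    rw [hsplit]
    refine add_mem_sup ⟨smul_mem _ _ (add_mem hx (hσK hx)), ?_⟩
      ⟨smul_mem _ _ (sub_mem hx (hσK hx)), ?_⟩
    · rw [SetLike.mem_coe, mem_eigenspace_iff, map_smul, map_add, hσ x, add_comm, one_smul]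
    · rw [SetLike.mem_coe, mem_eigenspace_iff, map_smul, map_sub, hσ x, smul_comm, neg_one_smul,
        neg_sub]
  have := finrank_sup_add_finrank_inf_eq (K ⊓ eigenspace σ 1) (K ⊓ eigenspace σ (-1))
  rw [hspan, hdisjoint, finrank_bot] at this
  omega

end Involution

namespace SinRelation

theorem sinSum_apply (n : ℕ) (a : Fin (n / 2) → ℚ) :
    sinSum n a = ∑ j, a j • Real.sin ((j.1 + 1) * π / n) := by
  simp [sinSum]

theorem sinSum_single (n : ℕ) (j : Fin (n / 2)) :
    sinSum n (Pi.single j 1) = Real.sin ((j.1 + 1) * π / n) := by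
  simp [sinSum]

theorem sin_nat_mul_pi_div_mem_range_sinSum {n : ℕ} (hn : 0 < n) (k : ℕ) :
    Real.sin (k * π / n) ∈ LinearMap.range (sinSum n) := by
  have hn' : (n : ℝ) ≠ 0 := by positivity
  have h_half {k : ℕ} (hk : k ≤ n / 2) : Real.sin (k * π / n) ∈ LinearMap.range (sinSum n) := by
    rcases k with _ | j
    · simp
    · exact ⟨Pi.single ⟨j, by omega⟩ 1, by rw [sinSum_single]; push_cast; rfl⟩
  have h_le {k : ℕ} (hk : k ≤ n) : Real.sin (k * π / n) ∈ LinearMap.range (sinSum n) := by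
    rcases le_or_gt k (n / 2) with hk' | hk'
    · exact h_half hk'
    · have : Real.sin (k * π / n) = Real.sin ((n - k : ℕ) * π / n) := by
        rw [← Real.sin_pi_sub, Nat.cast_sub hk]; congr 1; field_simp
      exact this ▸ h_half (by omega)
  have h_lt {k : ℕ} (hk : k < 2 * n) : Real.sin (k * π / n) ∈ LinearMap.range (sinSum n) := by
    rcases le_or_gt k n with hk' | hk'
    · exact h_le hk'
    · have : Real.sin (k * π / n) = -Real.sin ((2 * n - k : ℕ) * π / n) := by
        rw [← Real.sin_neg, ← Real.sin_sub_two_pi, Nat.cast_sub hk.le]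
        congr 1; push_cast; field_simp; ring
      exact this ▸ neg_mem (h_le (by omega))
  have : Real.sin (k * π / n) = Real.sin ((k % (2 * n) : ℕ) * π / n) := by
    have hk : (k : ℝ) = (k % (2 * n) : ℕ) + 2 * n * (k / (2 * n) : ℕ) := by
      exact_mod_cast (Nat.mod_add_div k (2 * n)).symm
    rw [← Real.sin_add_nat_mul_two_pi ((k % (2 * n) : ℕ) * π / n) (k / (2 * n)), hk]
    congr 1; field_simp
  exact this ▸ h_lt (Nat.mod_lt _ (by omega))

noncomputable def zeta (n : ℕ) : ℂ := exp (↑(π / n) * I)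

noncomputable def conjRat : Module.End ℚ ℂ := conjAe.toLinearMap.restrictScalars ℚ

noncomputable def smulIRat : ℝ →ₗ[ℚ] ℂ := (LinearMap.toSpanSingleton ℝ ℂ I).restrictScalars ℚ

theorem conjRat_apply (z : ℂ) : conjRat z = conj z := rfl

theorem smulIRat_apply (x : ℝ) : smulIRat x = x • I := rfl

theorem smulIRat_injective : Function.Injective smulIRat :=
  smul_left_injective ℝ I_ne_zero

theorem im_zeta_pow (n k : ℕ) : (zeta n ^ k).im = Real.sin (k * π / n) := by
  rw [zeta, ← Complex.exp_nat_mul, ← mul_assoc, ← ofReal_natCast, ← ofReal_mul,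
    exp_ofReal_mul_I_im, mul_div_assoc]

theorem conj_zeta (n : ℕ) : conj (zeta n) = (zeta n)⁻¹ := by
  rw [zeta, ← exp_conj, ← Complex.exp_neg, map_mul, conj_ofReal, conj_I, mul_neg]

variable {n : ℕ}

theorem isPrimitiveRoot_zeta (hn : 0 < n) : IsPrimitiveRoot (zeta n) (2 * n) := by
  convert Complex.isPrimitiveRoot_exp (2 * n) (by omega) using 1
  rw [zeta]
  congr 1
  push_cast
  field_simp

theorem finrank_adjoin_zeta (hn : 0 < n) :
    finrank ℚ (Algebra.adjoin ℚ {zeta n}) = Nat.totient (2 * n) := by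
  have : NeZero (2 * n) := ⟨by omega⟩
  have := (isPrimitiveRoot_zeta hn).adjoin_isCyclotomicExtension ℚ
  exact IsCyclotomicExtension.finrank _ (Polynomial.cyclotomic.irreducible_rat (by omega))

theorem conj_mem_adjoin_zeta (hn : 0 < n) {x : ℂ} (hx : x ∈ Algebra.adjoin ℚ {zeta n}) :
    conj x ∈ Algebra.adjoin ℚ {zeta n} := by
  induction hx using Algebra.adjoin_induction with
  | mem x hx =>
    have hinv : zeta n ^ (2 * n - 1) * zeta n = 1 := by
      rw [pow_sub_one_mul (by omega), (isPrimitiveRoot_zeta hn).pow_eq_one]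
    rw [Set.mem_singleton_iff.mp hx, conj_zeta, ← eq_inv_of_mul_eq_one_left hinv]
    exact pow_mem (Algebra.self_mem_adjoin_singleton ℚ _) _
  | algebraMap q => simpa using (Algebra.adjoin ℚ {zeta n}).algebraMap_mem q
  | add x y _ _ hx hy => simpa using add_mem hx hy
  | mul x y _ _ hx hy => simpa using mul_mem hx hy

theorem im_smul_I_mem_adjoin_zeta (hn : 0 < n) {x : ℂ} (hx : x ∈ Algebra.adjoin ℚ {zeta n}) :
    x.im • I ∈ Algebra.adjoin ℚ {zeta n} := by
  have : x.im • I = (2⁻¹ : ℚ) • (x - conj x) := by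
    rw [sub_conj, Rat.smul_def, real_smul]; push_cast; ring
  exact this ▸ Subalgebra.smul_mem _ (sub_mem hx (conj_mem_adjoin_zeta hn hx)) _

theorem im_mem_range_sinSum (hn : 0 < n) {x : ℂ} (hx : x ∈ Algebra.adjoin ℚ {zeta n}) :
    x.im ∈ LinearMap.range (sinSum n) := by
  have : Subalgebra.toSubmodule (Algebra.adjoin ℚ {zeta n}) ≤
      (LinearMap.range (sinSum n)).comap (imLm.restrictScalars ℚ) := by
    rw [Algebra.adjoin_eq_span, span_le]
    intro x hx
    obtain ⟨k, rfl⟩ := Submonoid.mem_closure_singleton.mp hx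
    simp only [SetLike.mem_coe, mem_comap, LinearMap.coe_restrictScalars, imLm_coe]
    exact (im_zeta_pow n k).symm ▸ sin_nat_mul_pi_div_mem_range_sinSum hn k
  exact this hx

theorem map_smulIRat_range_sinSum (hn : 0 < n) :
    (LinearMap.range (sinSum n)).map smulIRat =
      Subalgebra.toSubmodule (Algebra.adjoin ℚ {zeta n}) ⊓ eigenspace conjRat (-1) := by
  apply le_antisymm
  · rintro _ ⟨_, ⟨a, rfl⟩, rfl⟩
    refine ⟨?_, ?_⟩
    · rw [SetLike.mem_coe, smulIRat_apply, sinSum_apply, Finset.sum_smul]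
      refine sum_mem fun j _ => ?_
      rw [smul_assoc]
      refine Subalgebra.smul_mem _ ?_ _
      have := im_smul_I_mem_adjoin_zeta hn
        (pow_mem (Algebra.self_mem_adjoin_singleton ℚ (zeta n)) (j + 1))
      rwa [im_zeta_pow, Nat.cast_succ] at this
    · rw [SetLike.mem_coe, mem_eigenspace_iff, conjRat_apply, smulIRat_apply]
      simp
  · rintro x ⟨hxK, hx⟩
    rw [SetLike.mem_coe, mem_eigenspace_iff, conjRat_apply, neg_one_smul] at hx
    refine ⟨x.im, im_mem_range_sinSum hn hxK, ?_⟩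
    have hre : x.re = 0 := by simpa [eq_neg_iff_add_eq_zero, ← two_mul] using congrArg re hx
    apply Complex.ext <;> simp [smulIRat_apply, hre]

theorem finrank_adjoin_zeta_inf_eigenspace_conjRat_neg_one (hn : 2 ≤ n) :
    finrank ℚ ↥(Subalgebra.toSubmodule (Algebra.adjoin ℚ {zeta n}) ⊓
      eigenspace conjRat (-1)) = Nat.totient (2 * n) / 2 := by
  set K := Subalgebra.toSubmodule (Algebra.adjoin ℚ {zeta n})
  have hK : finrank ℚ K = Nat.totient (2 * n) :=
    (Subalgebra.finrank_toSubmodule _).trans (finrank_adjoin_zeta (by omega))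
  have : FiniteDimensional ℚ K :=
    Module.finite_of_finrank_pos (hK ▸ Nat.totient_pos.mpr (by omega))
  have hζK : zeta n ∈ K := Algebra.self_mem_adjoin_singleton ℚ _
  have hconj : K.map conjRat ≤ K := by
    rintro _ ⟨x, hx, rfl⟩
    exact conj_mem_adjoin_zeta (by omega) hx
  have hsum := finrank_inf_eigenspace_one_add_finrank_inf_eigenspace_neg_one
    (σ := conjRat) (fun z => conj_conj z) two_ne_zero hconj
  set w := zeta n - conj (zeta n) with hw_def
  have hwK : w ∈ K := sub_mem hζK (conj_mem_adjoin_zeta (by omega) hζK)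
  have hw : w ≠ 0 := by
    have : 0 < Real.sin (π / n) :=
      Real.sin_pos_of_pos_of_lt_pi (by positivity) (div_lt_self pi_pos (by norm_cast))
    rw [hw_def, sub_conj, ← pow_one (zeta n), im_zeta_pow, Nat.cast_one, one_mul]
    exact mul_ne_zero (ofReal_ne_zero.mpr (by positivity)) I_ne_zero
  have hswap (μ : ℚ) : (K ⊓ eigenspace conjRat μ).map (LinearMap.mulLeft ℚ w) ≤
      K ⊓ eigenspace conjRat (-μ) := by
    rintro _ ⟨x, ⟨hxK, hx⟩, rfl⟩
    refine ⟨Subalgebra.mul_mem _ hwK hxK, ?_⟩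
    rw [SetLike.mem_coe, mem_eigenspace_iff, conjRat_apply] at hx ⊢
    simp only [LinearMap.mulLeft_apply, map_mul, hx, hw_def, map_sub, conj_conj, Rat.smul_def,
      Rat.cast_neg]
    ring
  have heq := finrank_eq_of_injective_of_map_le (mul_right_injective₀ hw) (hswap 1)
    (by simpa using hswap (-1))
  omega

end SinRelation

open SinRelation

/-- The `ℚ`-vector space of tuples `(a_1,…,a_m) ∈ ℚ^m` (`m = ⌊n/2⌋`) with
`∑_{j=1}^m a_j sin (jπ/n) = 0` has dimension `m - φ(2n)/2`. -/
theorem sin_relation_space_dimension (n : ℕ) (hn : 2 ≤ n) :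
    Module.finrank ℚ ↥(LinearMap.ker (sinSum n)) =
      n / 2 - Nat.totient (2 * n) / 2 := by
  have hrank := LinearMap.finrank_range_add_finrank_ker (sinSum n)
  rw [Module.finrank_fin_fun] at hrank
  have hrange : finrank ℚ (LinearMap.range (sinSum n)) = Nat.totient (2 * n) / 2 := by
    rw [(equivMapOfInjective _ smulIRat_injective _).finrank_eq,
      map_smulIRat_range_sinSum (by omega), finrank_adjoin_zeta_inf_eigenspace_conjRat_neg_one hn]
  omega
end

section
/- Let n be an odd prime and m = (n−1)/2. Then the real numbers sin(π/n), sin(2π/n), …, sin(mπ/n) are linearly independent over ℚ. -/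
/-!
Put `ω = exp (π i / n)`, a primitive `2n`-th root of unity. Since `ω ^ n = -1`,
`2 i sin (k π / n) = ω ^ k - ω ^ (-k) = ω ^ k + ω ^ (n - k)`. For odd prime `n` the degree of `ω`
over `ℚ` is `φ (2n) = n - 1`, so `ω, ω², …, ω ^ (n - 1)` are linearly independent, and for
`1 ≤ k ≤ m` the exponents `k` and `n - k` run through disjoint halves of `1, …, n - 1`.
-/

open Function Finsupp in
theorem LinearIndependent.comp_add_comp {ι κ R M : Type*} [Ring R] [AddCommGroup M]
    [Module R M] {v : ι → M} (hv : LinearIndependent R v) {f g : κ → ι} (hf : Injective f)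
    (hfg : ∀ j k, f j ≠ g k) : LinearIndependent R fun j => v (f j) + v (g j) := by
  rw [linearIndependent_iff] at hv ⊢
  intro l hl
  have hsum : l.mapDomain f + l.mapDomain g = 0 := by
    apply hv
    rw [map_add, linearCombination_mapDomain, linearCombination_mapDomain, ← hl]
    simp [linearCombination_apply, Finsupp.sum_add]
  ext j
  have hj : f j ∉ Set.range g := fun ⟨k, hk⟩ => hfg j k hk.symm
  simpa [mapDomain_apply hf, mapDomain_of_notMem_range _ _ hj] using
    DFunLike.congr_fun hsum (f j)

theorem IsPrimitiveRoot.linearIndependent_pow_succ {K : Type*} [Field K] [CharZero K] {ζ : K}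
    {k : ℕ} (hζ : IsPrimitiveRoot ζ k) (hk : 0 < k) :
    LinearIndependent ℚ fun i : Fin k.totient => ζ ^ (i + 1 : ℕ) := by
  have hpow := linearIndependent_pow (K := ℚ) ζ
  rw [← Polynomial.cyclotomic_eq_minpoly_rat hζ hk, Polynomial.natDegree_cyclotomic] at hpow
  simpa only [pow_succ', Function.comp_def, LinearMap.mulLeft_apply] using
    hpow.map' (LinearMap.mulLeft ℚ ζ)
      (LinearMap.ker_eq_bot.mpr (mul_right_injective₀ (hζ.ne_zero hk.ne')))

theorem IsPrimitiveRoot.linearIndependent_pow_add_pow_sub {K : Type*} [Field K] [CharZero K]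
    {ζ : K} {k m : ℕ} (hζ : IsPrimitiveRoot ζ k) (hk : 0 < k) (hm : 2 * m ≤ k.totient) :
    LinearIndependent ℚ fun j : Fin m => ζ ^ (j + 1 : ℕ) + ζ ^ (k.totient - j) := by
  have hmk : m ≤ k.totient := by omega
  have hsum := (hζ.linearIndependent_pow_succ hk).comp_add_comp (Fin.castLE_injective hmk)
    (g := Fin.rev ∘ Fin.castLE hmk) fun i j => by
      simp only [Function.comp_apply, ne_eq, Fin.ext_iff, Fin.val_castLE, Fin.val_rev]
      omega
  have hrev : ∀ j : Fin m, (Fin.rev (Fin.castLE hmk j) : ℕ) + 1 = k.totient - j := by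
    intro j
    simp only [Fin.val_rev, Fin.val_castLE]
    omega
  simpa only [Function.comp_apply, hrev, Fin.val_castLE] using hsum

theorem Complex.two_mul_I_mul_sin_eq_pow_add_pow (n k : ℕ) (hn : n ≠ 0) (hk : k ≤ n) :
    2 * I * sin (k * Real.pi / n) =
      exp (Real.pi * I / n) ^ k + exp (Real.pi * I / n) ^ (n - k) := by
  have hnC : (n : ℂ) ≠ 0 := Nat.cast_ne_zero.mpr hn
  set z : ℂ := k * Real.pi / n with hz
  rw [← exp_nat_mul, ← exp_nat_mul, Nat.cast_sub hk,
    show (k : ℂ) * (Real.pi * I / n) = z * I by ring,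
    show ((n : ℂ) - k) * (Real.pi * I / n) = Real.pi * I - z * I by rw [hz]; field_simp,
    exp_sub, exp_pi_mul_I, sin, neg_mul, exp_neg]
  field_simp
  rw [I_sq]
  ring

open Complex in
/-- For an odd prime `n` and `m = (n-1)/2`, the real numbers
`sin (π/n), sin (2π/n), …, sin (mπ/n)` are linearly independent over `ℚ`. -/
theorem sin_linearIndependent_of_odd_prime (n : ℕ) (hp : n.Prime) (hodd : Odd n) :
    LinearIndependent ℚ
      (fun j : Fin ((n - 1) / 2) => Real.sin ((j.1 + 1) * Real.pi / n)) := by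
  set ω : ℂ := exp (Real.pi * I / n)
  have hn : n ≠ 0 := hp.ne_zero
  have hω : IsPrimitiveRoot ω (2 * n) := by
    convert isPrimitiveRoot_exp (2 * n) (by omega) using 2
    push_cast
    field_simp
  have htot : (2 * n).totient = n - 1 := by
    rw [Nat.totient_two_mul_of_odd hodd, Nat.totient_prime hp]
  have hsum : LinearIndependent ℚ
      fun j : Fin ((n - 1) / 2) => ω ^ (j + 1 : ℕ) + ω ^ (n - (j + 1)) := by
    simpa only [htot, Nat.sub_sub, add_comm 1] using
      hω.linearIndependent_pow_add_pow_sub (by omega) (by omega)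
  refine LinearIndependent.of_comp
    (LinearMap.mulLeft ℚ (2 * I) ∘ₗ (ofRealAm.restrictScalars ℚ).toLinearMap : ℝ →ₗ[ℚ] ℂ) ?_
  convert hsum using 2 with j
  have hsin := two_mul_I_mul_sin_eq_pow_add_pow n (j + 1) hn (by omega)
  push_cast at hsin
  simpa [mul_assoc, ω] using hsin
end

section
/- Let n = 2^k with k ≥ 1, and m = n/2. Then the real numbers sin(π/n), sin(2π/n), …, sin(mπ/n) are linearly independent over ℚ. -/
open Complex Polynomial Finset

/-- For `n = 2^k` with `k ≥ 1` and `m = n/2`, the real numbers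
`sin (π/n), sin (2π/n), …, sin (mπ/n)` are linearly independent over `ℚ`. -/
theorem sin_linearIndependent_of_pow_two (k : ℕ) (hk : 1 ≤ k) :
    LinearIndependent ℚ
      (fun j : Fin (2 ^ k / 2) => Real.sin ((j.1 + 1) * Real.pi / 2 ^ k)) := by
  set n : ℕ := 2 ^ k with hn
  set m : ℕ := n / 2 with hm
  have hmn : 2 * m = n := Nat.mul_div_cancel' (dvd_pow_self 2 (by omega))
  have hnge : 2 ≤ n := by
    rw [hn]; exact Nat.one_lt_two_pow_iff.2 (by omega)
  have hm1 : 1 ≤ m := by omega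
  have hnpos : 0 < n := by omega
  have hn0 : (n : ℂ) ≠ 0 := Nat.cast_ne_zero.2 hnpos.ne'
  have hncast : ((n : ℕ) : ℝ) = (2 : ℝ) ^ k := by rw [hn]; push_cast; ring
  set ζ : ℂ := Complex.exp (Real.pi * Complex.I / n) with hζdef
  have hζ : IsPrimitiveRoot ζ (2 * n) := by
    have h := Complex.isPrimitiveRoot_exp (2 * n) (by omega)
    have heq : Complex.exp (2 * Real.pi * Complex.I / ((2 * n : ℕ) : ℂ)) = ζ := by
      rw [hζdef]
      congr 1
      push_cast
      field_simp
    rwa [heq] at h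
  have hdeg : (minpoly ℚ ζ).natDegree = n := by
    have h2n : 2 * n = 2 ^ (k + 1) := by rw [hn, pow_succ]; ring
    rw [← cyclotomic_eq_minpoly_rat hζ (by omega), natDegree_cyclotomic, h2n,
      Nat.totient_prime_pow Nat.prime_two (Nat.succ_pos k)]
    simp [hn]
  have hLI : LinearIndependent ℚ (fun i : Fin n => ζ ^ (i : ℕ)) := by
    have h := linearIndependent_pow (K := ℚ) ζ
    rwa [hdeg] at h
  have hpow : ∀ a : ℕ, ζ ^ a = Complex.exp (a * Real.pi * Complex.I / n) := by
    intro a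
    rw [hζdef, ← Complex.exp_nat_mul]
    congr 1
    ring
  have hζn : ζ ^ n = -1 := by
    rw [hpow n]
    have : (n : ℂ) * Real.pi * Complex.I / n = Real.pi * Complex.I := by
      field_simp
    rw [this, Complex.exp_pi_mul_I]
  -- key identity
  have hkey : ∀ j : ℕ, j < m →
      ζ ^ (m - 1 - j) - ζ ^ (m + 1 + j) =
        2 * Complex.sin (((j : ℂ) + 1) * Real.pi / n) := by
    intro j hj
    rw [hpow, hpow]
    have hcast : ((m - 1 - j : ℕ) : ℂ) = (m : ℂ) - 1 - j := by
      have h1 : j ≤ m - 1 := by omega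
      push_cast [Nat.cast_sub h1, Nat.cast_sub hm1]
      ring
    rw [hcast]
    have hmc : (m : ℂ) = (n : ℂ) / 2 := by
      have h2 : ((2 * m : ℕ) : ℂ) = (n : ℂ) := by exact_mod_cast congrArg (Nat.cast (R := ℂ)) hmn
      push_cast at h2
      rw [eq_div_iff (two_ne_zero)]
      linear_combination h2
    set θ : ℂ := ((j : ℂ) + 1) * Real.pi / n with hθ
    have e1 : ((m : ℂ) - 1 - j) * Real.pi * Complex.I / n =
        ((Real.pi : ℂ) / 2 - θ) * Complex.I := by
      rw [hmc, hθ]; field_simp; ring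
    have e2 : ((m + 1 + j : ℕ) : ℂ) * Real.pi * Complex.I / n =
        ((Real.pi : ℂ) / 2 + θ) * Complex.I := by
      push_cast
      rw [hmc, hθ]; field_simp; ring
    rw [e1, e2, Complex.exp_mul_I, Complex.exp_mul_I]
    rw [Complex.cos_sub, Complex.sin_sub, Complex.cos_add, Complex.sin_add,
      Complex.cos_pi_div_two, Complex.sin_pi_div_two]
    ring
  -- main argument
  rw [Fintype.linearIndependent_iff]
  intro g hg
  set G : ℕ → ℚ := fun t => if h : t < m then g ⟨t, h⟩ else 0 with hG
  set C : ℕ → ℚ := fun i =>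
    (if i < m then G (m - 1 - i) else 0) - (if m + 1 ≤ i then G (i - m - 1) else 0)
      + (if i = 0 then G (m - 1) else 0) with hC
  have hsum : ∑ i : Fin n, C i.1 • ζ ^ (i : ℕ) = 0 := by
    have key : ∑ i : Fin n, C i.1 • ζ ^ (i : ℕ)
        = ∑ j ∈ Finset.range m, (G j : ℂ) * (ζ ^ (m - 1 - j) - ζ ^ (m + 1 + j)) := by
      have lhs_eq : ∑ i : Fin n, C i.1 • ζ ^ (i : ℕ)
          = ∑ i ∈ Finset.range n, (C i : ℂ) * ζ ^ i := by
        rw [Fin.sum_univ_eq_sum_range (fun i => C i • ζ ^ i) n]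
        exact Finset.sum_congr rfl fun i _ => Rat.smul_def _ _
      rw [lhs_eq]
      have hCc : ∀ i : ℕ, ((C i : ℚ) : ℂ) =
          (if i < m then (G (m - 1 - i) : ℂ) else 0)
            - (if m + 1 ≤ i then (G (i - m - 1) : ℂ) else 0)
            + (if i = 0 then (G (m - 1) : ℂ) else 0) := by
        intro i
        simp only [hC]
        push_cast [apply_ite ((↑·) : ℚ → ℂ)]
        ring
      calc ∑ i ∈ Finset.range n, (C i : ℂ) * ζ ^ i
          = (∑ i ∈ Finset.range n, (if i < m then (G (m - 1 - i) : ℂ) else 0) * ζ ^ i)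
            - (∑ i ∈ Finset.range n, (if m + 1 ≤ i then (G (i - m - 1) : ℂ) else 0) * ζ ^ i)
            + ∑ i ∈ Finset.range n, (if i = 0 then (G (m - 1) : ℂ) else 0) * ζ ^ i := by
            rw [← Finset.sum_sub_distrib, ← Finset.sum_add_distrib]
            refine Finset.sum_congr rfl fun i _ => ?_
            rw [hCc i]; ring
        _ = (∑ j ∈ Finset.range m, (G j : ℂ) * ζ ^ (m - 1 - j))
            - (∑ j ∈ Finset.range (m - 1), (G j : ℂ) * ζ ^ (m + 1 + j))
            + (G (m - 1) : ℂ) := by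
            congr 1
            congr 1
            · -- first sum
              rw [← Finset.sum_range_reflect (fun j => (G j : ℂ) * ζ ^ (m - 1 - j)) m]
              rw [← Finset.sum_subset (Finset.range_subset_range.2 (by omega : m ≤ n))
                (fun x _ hx => by
                  simp only [Finset.mem_range, not_lt] at hx
                  rw [if_neg (by omega), zero_mul])]
              refine Finset.sum_congr rfl fun i hi => ?_
              simp only [Finset.mem_range] at hi
              rw [if_pos hi, Nat.sub_sub_self (by omega : i ≤ m - 1)]
            · -- second sum
              have step : ∑ i ∈ Finset.range n,
                    (if m + 1 ≤ i then (G (i - m - 1) : ℂ) else 0) * ζ ^ i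
                  = ∑ i ∈ Finset.Ico (m + 1) n, (G (i - m - 1) : ℂ) * ζ ^ i := by
                rw [Finset.range_eq_Ico, ← Finset.sum_Ico_consecutive _
                  (by omega : 0 ≤ m + 1) (by omega : m + 1 ≤ n)]
                rw [Finset.sum_eq_zero (fun i hi => by
                  simp only [Finset.mem_Ico] at hi
                  rw [if_neg (by omega), zero_mul]), zero_add]
                refine Finset.sum_congr rfl fun i hi => ?_
                simp only [Finset.mem_Ico] at hi
                rw [if_pos hi.1]
              rw [step, Finset.sum_Ico_eq_sum_range]
              have hcard : n - (m + 1) = m - 1 := by omega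
              rw [hcard]
              refine Finset.sum_congr rfl fun j _ => ?_
              have hj' : m + 1 + j - m - 1 = j := by omega
              rw [hj']
            · -- third sum
              rw [Finset.sum_eq_single_of_mem 0 (Finset.mem_range.2 (by omega))
                (fun i _ hi => by rw [if_neg hi, zero_mul])]
              rw [if_pos rfl, pow_zero, mul_one]
        _ = ∑ j ∈ Finset.range m, (G j : ℂ) * (ζ ^ (m - 1 - j) - ζ ^ (m + 1 + j)) := by
            have hmsplit : m = (m - 1) + 1 := by omega
            have h2m : m + 1 + (m - 1) = n := by omega
            have hsplitA := Finset.sum_range_succ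
              (fun j => (G j : ℂ) * ζ ^ (m - 1 - j)) (m - 1)
            rw [← hmsplit] at hsplitA
            have hsplitT := Finset.sum_range_succ
              (fun j => (G j : ℂ) * (ζ ^ (m - 1 - j) - ζ ^ (m + 1 + j))) (m - 1)
            rw [← hmsplit] at hsplitT
            rw [hsplitA, hsplitT]
            simp only [Nat.sub_self, pow_zero, h2m, hζn, mul_sub, Finset.sum_sub_distrib]
            ring
    rw [key]
    have key2 : ∑ j ∈ Finset.range m, (G j : ℂ) * (ζ ^ (m - 1 - j) - ζ ^ (m + 1 + j))
        = 2 * ((∑ j ∈ Finset.range m,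
            (G j : ℝ) * Real.sin (((j : ℝ) + 1) * Real.pi / n) : ℝ) : ℂ) := by
      push_cast
      rw [Finset.mul_sum]
      refine Finset.sum_congr rfl fun j hj => ?_
      simp only [Finset.mem_range] at hj
      rw [hkey j hj]
      ring
    rw [key2]
    have hreal : ∑ j ∈ Finset.range m,
        (G j : ℝ) * Real.sin (((j : ℝ) + 1) * Real.pi / n) = 0 := by
      rw [← Fin.sum_univ_eq_sum_range
        (fun t => (G t : ℝ) * Real.sin (((t : ℝ) + 1) * Real.pi / n)) m]
      rw [← hg]
      refine Finset.sum_congr rfl fun j _ => ?_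
      rw [Rat.smul_def]
      have hGj : G j.1 = g j := by
        simp only [hG]
        rw [dif_pos j.2]
      rw [hGj, hncast]
    rw [hreal]
    simp
  have hc := Fintype.linearIndependent_iff.1 hLI (fun i => C i.1) hsum
  intro j
  by_cases hj : j.1 = m - 1
  · have h0 := hc ⟨0, by omega⟩
    have h0' : C 0 = 0 := h0
    have e : C 0 = G (m - 1) + G (m - 1) := by
      show ((if 0 < m then G (m - 1 - 0) else 0) - (if m + 1 ≤ 0 then G (0 - m - 1) else 0)
          + if (0 : ℕ) = 0 then G (m - 1) else 0) = G (m - 1) + G (m - 1)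
      rw [if_pos (show 0 < m by omega), if_neg (show ¬ m + 1 ≤ 0 by omega), if_pos rfl, Nat.sub_zero]
      ring
    rw [e] at h0'
    have hz : G (m - 1) = 0 := by linarith [h0']
    have hGj : G (m - 1) = g j := by
      simp only [hG]
      rw [dif_pos (by omega : m - 1 < m)]
      congr 1
      exact Fin.ext hj.symm
    rw [← hGj]; exact hz
  · have hjm : j.1 < m := j.2
    have h1 := hc ⟨m - 1 - j.1, by omega⟩
    have h1' : C (m - 1 - j.1) = 0 := h1
    have e : C (m - 1 - j.1) = G j.1 := by
      show ((if m - 1 - j.1 < m then G (m - 1 - (m - 1 - j.1)) else 0)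
          - (if m + 1 ≤ m - 1 - j.1 then G (m - 1 - j.1 - m - 1) else 0)
          + if m - 1 - j.1 = 0 then G (m - 1) else 0) = G j.1
      rw [if_pos (by omega : m - 1 - j.1 < m), if_neg (by omega), if_neg (by omega),
        Nat.sub_sub_self (by omega : j.1 ≤ m - 1)]
      ring
    rw [e] at h1'
    have hGj : G j.1 = g j := by
      simp only [hG]
      rw [dif_pos hjm]
    rw [← hGj]
    exact h1'
end

section
/- If (a_1,…,a_4) ∈ ℚ^4 satisfies a_1 sin(π/9) + a_2 sin(2π/9) + a_3 sin(3π/9) + a_4 sin(4π/9) = 0 and a_1 + a_2 + a_3 + a_4 = 0, then a_1 = a_2 = a_3 = a_4 = 0. -/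
open Polynomial

-- the cubic X^3 - (3/4)X + 1/8 over ℚ has no rational root
lemma no_rat_root (r : ℚ) (hr : r^3 - 3/4*r + 1/8 = 0) : False := by
  set t : ℚ := 2*r with ht
  have htc : t^3 - 3*t + 1 = 0 := by rw [ht]; ring_nf; linarith [hr]
  have haev : aeval t ((X:ℤ[X])^3 - 3*X + 1) = 0 := by
    simp only [map_sub, map_add, map_pow, map_one, aeval_X, map_mul, map_ofNat]
    push_cast
    linear_combination htc
  have hm : ((X:ℤ[X])^3 - 3*X + 1).Monic := by
    monicity!
  obtain ⟨n, hn, hdvd⟩ := exists_integer_of_is_root_of_monic hm haev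
  have hc0 : ((X:ℤ[X])^3 - 3*X + 1).coeff 0 = 1 := by simp
  rw [hc0] at hdvd
  have := Int.isUnit_iff.mp (isUnit_of_dvd_one hdvd)
  have hnc : (n:ℚ)^3 - 3*(n:ℚ) + 1 = 0 := by
    rw [hn, show (algebraMap ℤ ℚ) n = (n:ℚ) from by simp] at htc
    exact htc
  rcases this with h | h <;> rw [h] at hnc <;> norm_num at hnc

lemma quad_indep (q₀ q₁ q₂ : ℚ)
    (h : (q₀:ℝ) + (q₁:ℝ) * Real.cos (2*Real.pi/9) + (q₂:ℝ) * Real.cos (2*Real.pi/9)^2 = 0) :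
    q₀ = 0 ∧ q₁ = 0 ∧ q₂ = 0 := by
  set y : ℝ := Real.cos (2*Real.pi/9) with hy
  have hy3 : 8*y^3 - 6*y + 1 = 0 := by
    have h3 := Real.cos_three_mul (2*Real.pi/9)
    rw [show (3:ℝ)*(2*Real.pi/9) = Real.pi - Real.pi/3 by ring, Real.cos_pi_sub,
      Real.cos_pi_div_three] at h3
    rw [hy]; linarith
  -- the minimal polynomial of y
  set p : ℚ[X] := X^3 - C (3/4) * X + C (1/8) with hp
  have hpm : p.Monic := by rw [hp]; monicity!
  have hdeg : p.natDegree = 3 := by rw [hp]; compute_degree!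
  have hroots : p.roots = 0 := by
    rw [Multiset.eq_zero_iff_forall_notMem]
    intro r hr
    rw [mem_roots (hpm.ne_zero), IsRoot.def, hp] at hr
    simp only [eval_add, eval_sub, eval_mul, eval_pow, eval_X, eval_C] at hr
    exact no_rat_root r (by linarith)
  have hpirr : Irreducible p :=
    (irreducible_iff_roots_eq_zero_of_degree_le_three (by omega) (by omega)).mpr hroots
  have haev : aeval y p = 0 := by
    rw [hp]
    simp only [map_sub, map_add, map_pow, map_mul, aeval_X, aeval_C]
    push_cast
    norm_num
    linear_combination (1/8 : ℝ) * hy3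
  have hmin : minpoly ℚ y = p := (minpoly.eq_of_irreducible_of_monic hpirr haev hpm).symm
  set q : ℚ[X] := C q₀ + C q₁ * X + C q₂ * X^2 with hq
  have haq : aeval y q = 0 := by
    rw [hq]
    simp only [map_add, map_mul, map_pow, aeval_X, aeval_C]
    exact h
  have hq0 : q = 0 := by
    by_contra hne
    have hdvd : minpoly ℚ y ∣ q := minpoly.dvd ℚ y haq
    rw [hmin] at hdvd
    have hle : p.natDegree ≤ q.natDegree := natDegree_le_of_dvd hdvd hne
    have hq2 : q.natDegree ≤ 2 := by rw [hq]; compute_degree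
    omega
  refine ⟨?_, ?_, ?_⟩
  · have := congrArg (fun f => Polynomial.coeff f 0) hq0
    simpa [hq, coeff_C] using this
  · have := congrArg (fun f => Polynomial.coeff f 1) hq0
    simpa [hq, coeff_C] using this
  · have := congrArg (fun f => Polynomial.coeff f 2) hq0
    simpa [hq, coeff_C] using this


/-- If `(a₁,…,a₄) ∈ ℚ⁴` satisfies
`a₁ sin (π/9) + a₂ sin (2π/9) + a₃ sin (3π/9) + a₄ sin (4π/9) = 0` and
`a₁ + a₂ + a₃ + a₄ = 0`, then `a₁ = a₂ = a₃ = a₄ = 0`. -/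
theorem nine_only_trivial_identity (a₁ a₂ a₃ a₄ : ℚ)
    (h1 : (a₁ : ℝ) * Real.sin (Real.pi / 9) + (a₂ : ℝ) * Real.sin (2 * Real.pi / 9) +
        (a₃ : ℝ) * Real.sin (3 * Real.pi / 9) + (a₄ : ℝ) * Real.sin (4 * Real.pi / 9) = 0)
    (h2 : a₁ + a₂ + a₃ + a₄ = 0) :
    a₁ = 0 ∧ a₂ = 0 ∧ a₃ = 0 ∧ a₄ = 0 := by

  set s : ℝ := Real.sin (Real.pi/9) with hs
  set c : ℝ := Real.cos (Real.pi/9) with hc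
  set y : ℝ := Real.cos (2*Real.pi/9) with hyy
  have hcos3 : Real.cos (3*(Real.pi/9)) = 1/2 := by
    rw [show (3:ℝ)*(Real.pi/9) = Real.pi/3 by ring, Real.cos_pi_div_three]
  have hy3 : y^3 = (6*y - 1)/8 := by
    have h3 := Real.cos_three_mul (2*Real.pi/9)
    rw [show (3:ℝ)*(2*Real.pi/9) = Real.pi - Real.pi/3 by ring, Real.cos_pi_sub,
      Real.cos_pi_div_three] at h3
    rw [hyy]; linarith
  have hy2 : y = 2*c^2 - 1 := by
    rw [hyy, hc, show (2:ℝ)*Real.pi/9 = 2*(Real.pi/9) by ring, Real.cos_two_mul]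
  have hs2 : s^2 = (1-y)/2 := by
    have := Real.sin_sq_add_cos_sq (Real.pi/9)
    rw [← hs, ← hc] at this
    nlinarith [hy2]
  have hcy : c = 2*y^2 + y - 1 := by
    have hadd := Real.cos_add_cos (4*(Real.pi/9)) (2*(Real.pi/9))
    rw [show ((4*(Real.pi/9)) + (2*(Real.pi/9)))/2 = 3*(Real.pi/9) by ring,
      show ((4*(Real.pi/9)) - (2*(Real.pi/9)))/2 = Real.pi/9 by ring, hcos3, ← hc] at hadd
    have h4 : Real.cos (4*(Real.pi/9)) = 2*y^2 - 1 := by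
      rw [show (4:ℝ)*(Real.pi/9) = 2*(2*Real.pi/9) by ring, Real.cos_two_mul, ← hyy]
    have h2' : Real.cos (2*(Real.pi/9)) = y := by rw [hyy]; ring_nf
    rw [h4, h2'] at hadd
    linarith
  have hsin2 : Real.sin (2*Real.pi/9) = 2*s*c := by
    rw [show (2:ℝ)*Real.pi/9 = 2*(Real.pi/9) by ring, Real.sin_two_mul, hs, hc]
  have hsin3 : Real.sin (3*Real.pi/9) = 3*s - 4*s^3 := by
    rw [show (3:ℝ)*Real.pi/9 = 3*(Real.pi/9) by ring, Real.sin_three_mul, hs]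
  have hsin4 : Real.sin (4*Real.pi/9) = 2*(2*s*c)*y := by
    rw [show (4:ℝ)*Real.pi/9 = 2*(2*Real.pi/9) by ring, Real.sin_two_mul, ← hyy, ← hsin2]
  rw [hsin2, hsin3, hsin4] at h1
  have hEs : 2*(a₁:ℝ)*s^2 + 4*(a₂:ℝ)*s^2*c + (a₃:ℝ)*(6*s^2 - 8*s^2*s^2)
      + 8*(a₄:ℝ)*s^2*c*y = 0 := by linear_combination (2*s)*h1
  rw [hs2, hcy] at hEs
  have hQ : ((a₁ - 3/2*a₂ + a₃ - 1/2*a₄ : ℚ) : ℝ)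
      + ((-a₁ + a₂ + a₃ : ℚ) : ℝ) * y + ((2*a₂ - 2*a₃ + 2*a₄ : ℚ) : ℝ) * y^2 = 0 := by
    push_cast
    linear_combination hEs + (4*(a₂:ℝ) - 4*(a₄:ℝ) + 8*(a₄:ℝ)*y)*hy3
  obtain ⟨e0, e1, e2⟩ := quad_indep _ _ _ hQ
  refine ⟨?_, ?_, ?_, ?_⟩ <;> linarith
end

section
/- Let p be an odd prime and n = 2p, m = ⌊n/2⌋ = p. Then there exists a tuple (a_1,…,a_m) of rational numbers with Σ_{j=1}^m a_j sin(jπ/n) = 0 but Σ_{j=1}^m a_j ≠ 0 (an improper identity). -/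
open Finset

lemma telescope (θ : ℝ) (m : ℕ) :
    2 * Real.cos θ * ∑ k ∈ Finset.range m, (-1:ℝ)^k * Real.sin ((2*k+1) * θ)
      = -((-1:ℝ)^m * Real.sin (2*m*θ)) := by
  induction m with
  | zero => simp
  | succ m ih =>
    have key : Real.sin ((2*(m:ℝ)+1)*θ + θ) + Real.sin ((2*(m:ℝ)+1)*θ - θ)
        = 2 * Real.cos θ * Real.sin ((2*(m:ℝ)+1)*θ) := by
      rw [Real.sin_add, Real.sin_sub]; ring
    rw [Finset.sum_range_succ, mul_add, ih]
    have a1 : (2*((m:ℝ)+1))*θ = (2*(m:ℝ)+1)*θ + θ := by ring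
    have a2 : (2*(m:ℝ))*θ = (2*(m:ℝ)+1)*θ - θ := by ring
    push_cast
    rw [a1, a2, pow_succ]
    linear_combination (-(-1:ℝ)^m) * key

lemma split_even {M : Type*} [AddCommMonoid M] (g : ℕ → M) (n : ℕ) :
    ∑ i ∈ Finset.range (2*n+1), g i
      = ∑ k ∈ Finset.range (n+1), g (2*k) + ∑ k ∈ Finset.range n, g (2*k+1) := by
  induction n with
  | zero => simp
  | succ n ih =>
    have h : 2*(n+1)+1 = (2*n+1) + 1 + 1 := by ring
    rw [h, Finset.sum_range_succ, Finset.sum_range_succ, ih,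
      Finset.sum_range_succ (fun k => g (2*k)) (n+1),
      Finset.sum_range_succ (fun k => g (2*k)) n,
      Finset.sum_range_succ (fun k => g (2*k+1)) n]
    have e1 : 2*(n+1) = 2*n+1+1 := by ring
    rw [e1]
    abel

/-- For `p` an odd prime and `n = 2p`, `m = ⌊n/2⌋ = p`, there is an improper
identity: a tuple `(a_1,…,a_m) ∈ ℚ^m` with `∑_{j=1}^m a_j sin (jπ/n) = 0`
but `∑_{j=1}^m a_j ≠ 0`. -/
theorem improper_identity_two_mul_prime (p : ℕ) (hp : p.Prime) (hodd : Odd p) :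
    ∃ a : Fin (2 * p / 2) → ℚ,
      (∑ j, (a j : ℝ) * Real.sin ((j.1 + 1) * Real.pi / (2 * p))) = 0 ∧
      (∑ j, a j) ≠ 0 := by
  obtain ⟨t, ht⟩ := hodd
  have hp2 : 2 ≤ p := hp.two_le
  have hm : 2 * p / 2 = p := by omega
  set A : ℕ → ℚ := fun i => if 2 ∣ i then (if i + 1 = p then 1 else 2) * (-1)^(i/2) else 0 with hA
  set θ : ℝ := Real.pi / (2 * p) with hθ
  have hpR : (2:ℝ) ≤ (p:ℝ) := by exact_mod_cast hp2
  have hπ : 2 * (p : ℝ) * θ = Real.pi := by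
    rw [hθ]
    field_simp
  set f : ℕ → ℝ := fun k => (-1:ℝ)^k * Real.sin ((2*k+1) * θ) with hf
  have hAeven : ∀ k : ℕ, A (2*k) = (if 2*k + 1 = p then 1 else 2) * (-1:ℚ)^k := by
    intro k
    rw [hA]
    simp only
    rw [if_pos (Dvd.intro k rfl), Nat.mul_div_cancel_left k (by norm_num)]
  have hAodd : ∀ k : ℕ, A (2*k+1) = 0 := by
    intro k
    rw [hA]
    simp only
    rw [if_neg (by omega)]
  -- the alternating sum vanishes
  have h0 : ∑ k ∈ Finset.range p, f k = 0 := by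
    have hθpos : 0 < θ := by rw [hθ]; positivity
    have hθlt : θ < Real.pi / 2 := by
      rw [hθ]
      exact div_lt_div_of_pos_left Real.pi_pos two_pos (by linarith)
    have hc : 0 < Real.cos θ := Real.cos_pos_of_mem_Ioo ⟨by linarith, hθlt⟩
    have htel := telescope θ p
    rw [hπ, Real.sin_pi, mul_zero, neg_zero] at htel
    have h2c : 2 * Real.cos θ ≠ 0 := by positivity
    exact (mul_eq_zero.mp htel).resolve_left h2c
  -- reflection identity
  have h1 : ∑ k ∈ Finset.range p, f k
      = ∑ k ∈ Finset.range (t+1), f k + ∑ k ∈ Finset.range t, f k := by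
    have hpt : p = (t+1) + t := by omega
    rw [hpt, Finset.sum_range_add]
    congr 1
    rw [← Finset.sum_range_reflect (fun i => f (t+1+i)) t]
    apply Finset.sum_congr rfl
    intro i hi
    have hit : i < t := Finset.mem_range.mp hi
    obtain ⟨s, hs⟩ := Nat.exists_eq_add_of_lt hit
    have hidx : t + 1 + (t - 1 - i) = i + 2*(s+1) := by omega
    rw [hidx, hf]
    simp only
    have hpow : (-1:ℝ)^(i+2*(s+1)) = (-1:ℝ)^i := by
      rw [pow_add, pow_mul, neg_one_sq, one_pow, mul_one]
    rw [hpow]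
    congr 1
    have hpc : (p:ℝ) = 2*(i:ℝ) + 2*(s:ℝ) + 3 := by
      have hn : p = 2*i + 2*s + 3 := by omega
      exact_mod_cast congrArg (Nat.cast (R := ℝ)) hn
    have harg : (2*((i + 2*(s+1) : ℕ):ℝ)+1)*θ = Real.pi - (2*(i:ℝ)+1)*θ := by
      rw [← hπ, hpc]
      push_cast
      ring
    rw [harg, Real.sin_pi_sub]
  -- the main sum identity
  have hG : ∑ i ∈ Finset.range p, (A i : ℝ) * Real.sin (((i:ℝ) + 1) * θ)
      = ∑ k ∈ Finset.range p, f k := by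
    conv_lhs => rw [ht]
    rw [split_even (fun i => (A i : ℝ) * Real.sin (((i:ℝ) + 1) * θ)) t]
    have hodd0 : ∑ k ∈ Finset.range t,
        (A (2*k+1) : ℝ) * Real.sin ((((2*k+1 : ℕ):ℝ) + 1) * θ) = 0 := by
      apply Finset.sum_eq_zero
      intro k _
      rw [hAodd]
      simp
    rw [hodd0, add_zero, h1, Finset.sum_range_succ, Finset.sum_range_succ (f := f)]
    have hterm : ∀ k ∈ Finset.range t,
        (A (2*k) : ℝ) * Real.sin ((((2*k : ℕ):ℝ) + 1) * θ) = f k + f k := by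
      intro k hk
      rw [hAeven, if_neg (by have := Finset.mem_range.mp hk; omega), hf]
      simp only
      push_cast
      ring
    have hlast : (A (2*t) : ℝ) * Real.sin ((((2*t : ℕ):ℝ) + 1) * θ) = f t := by
      rw [hAeven, if_pos (by omega), hf]
      simp only
      push_cast
      ring
    rw [Finset.sum_congr rfl hterm, hlast, Finset.sum_add_distrib]
    ring
  refine ⟨fun j => A j.1, ?_, ?_⟩
  · have hrw : ∑ j : Fin (2*p/2), (A j.1 : ℝ) * Real.sin (((j.1 : ℝ) + 1) * Real.pi / (2 * p))
        = ∑ i ∈ Finset.range (2*p/2),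
            (A i : ℝ) * Real.sin (((i:ℝ) + 1) * Real.pi / (2 * p)) :=
      Fin.sum_univ_eq_sum_range (fun i => (A i : ℝ) * Real.sin (((i:ℝ) + 1) * Real.pi / (2 * p))) (2*p/2)
    rw [hrw, hm]
    have hargs : ∀ i : ℕ, ((i:ℝ) + 1) * Real.pi / (2 * p) = ((i:ℝ) + 1) * θ := by
      intro i
      rw [hθ, mul_div_assoc]
    calc ∑ i ∈ Finset.range p, (A i : ℝ) * Real.sin (((i:ℝ) + 1) * Real.pi / (2 * p))
        = ∑ i ∈ Finset.range p, (A i : ℝ) * Real.sin (((i:ℝ) + 1) * θ) := by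
          apply Finset.sum_congr rfl
          intro i _
          rw [hargs]
      _ = 0 := by rw [hG, h0]
  · have hrw : ∑ j : Fin (2*p/2), A j.1 = ∑ i ∈ Finset.range (2*p/2), A i :=
      Fin.sum_univ_eq_sum_range A (2*p/2)
    rw [hrw, hm]
    conv_lhs => rw [ht]
    rw [split_even A t, Finset.sum_eq_zero (fun k _ => hAodd k), add_zero,
      Finset.sum_range_succ, hAeven t, if_pos (by omega),
      Finset.sum_congr rfl (fun k hk => by
        rw [hAeven k, if_neg (by have := Finset.mem_range.mp hk; omega)])]
    simp only [one_mul]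
    rw [← Finset.mul_sum, neg_one_geom_sum]
    rcases Nat.even_or_odd t with h | h
    · rw [if_pos h, h.neg_one_pow]
      norm_num
    · rw [if_neg (Nat.not_even_iff_odd.mpr h), h.neg_one_pow]
      norm_num
end

section
/- Let p and q be odd primes with 3 ≤ p < q and let n = pq, m = ⌊n/2⌋. Then there exists a tuple (a_1,…,a_m) of rational numbers with Σ_{j=1}^m a_j sin(jπ/n) = 0 but Σ_{j=1}^m a_j ≠ 0 (an improper identity). -/
open Finset

/-- Sum of sines at `p` equally spaced angles vanishes. -/
lemma sin_sum_zero (p : ℕ) (hp : 3 ≤ p) (θ : ℝ) :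
    ∑ k ∈ Finset.range p, Real.sin (θ + k * (2 * Real.pi / p)) = 0 := by
  have hp0 : (0:ℝ) < p := by positivity
  have hp3 : (3:ℝ) ≤ p := by exact_mod_cast hp
  set z : ℂ := Complex.exp ((2 * Real.pi / p : ℝ) * Complex.I) with hz
  have hz1 : z ≠ 1 := by
    intro h
    have him : Real.sin (2 * Real.pi / p) = 0 := by
      have := congrArg Complex.im h
      rw [hz, Complex.exp_ofReal_mul_I_im] at this
      simpa using this
    have hpos : 0 < Real.sin (2 * Real.pi / p) := by
      apply Real.sin_pos_of_pos_of_lt_pi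
      · positivity
      · rw [div_lt_iff₀ hp0]
        nlinarith [Real.pi_pos]
    linarith
  have hzp : z ^ p = 1 := by
    rw [hz, ← Complex.exp_nat_mul]
    have : (p : ℂ) * (((2 * Real.pi / p : ℝ) : ℂ) * Complex.I)
        = 2 * (Real.pi : ℂ) * Complex.I := by
      have hp0' : (p : ℂ) ≠ 0 := by exact_mod_cast hp0.ne'
      push_cast
      field_simp
    rw [this, Complex.exp_two_pi_mul_I]
  have key : ∑ k ∈ Finset.range p,
      Complex.exp (((θ + k * (2 * Real.pi / p) : ℝ)) * Complex.I) = 0 := by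
    have hterm : ∀ k : ℕ, Complex.exp (((θ + k * (2 * Real.pi / p) : ℝ)) * Complex.I)
        = Complex.exp ((θ : ℝ) * Complex.I) * z ^ k := by
      intro k
      rw [hz, ← Complex.exp_nat_mul, ← Complex.exp_add]
      congr 1
      push_cast
      ring
    simp only [hterm, ← Finset.mul_sum]
    rw [geom_sum_eq hz1, hzp]
    simp
  have h2 := congrArg Complex.im key
  rw [Complex.im_sum] at h2
  simp only [Complex.exp_ofReal_mul_I_im] at h2
  simpa using h2

/-- Fold an angle index `r` (for `sin (rπ/n)`) into the range `[1, n/2]`. -/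
def foldIdx (n r : ℕ) : ℕ :=
  if (if r < n then r else 2 * n - r) ≤ n / 2 then (if r < n then r else 2 * n - r)
  else n - (if r < n then r else 2 * n - r)

lemma foldIdx_bounds (n r : ℕ) (hn : Odd n) (h1 : 1 ≤ r) (h2 : r < 2 * n)
    (h3 : r ≠ n) : 1 ≤ foldIdx n r ∧ foldIdx n r ≤ n / 2 := by
  unfold foldIdx
  obtain ⟨t, ht⟩ := hn
  split_ifs <;> omega

lemma sin_foldIdx (n r : ℕ) (hn : Odd n) (h1 : 1 ≤ r) (h2 : r < 2 * n)
    (h3 : r ≠ n) :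
    Real.sin ((foldIdx n r : ℝ) * Real.pi / n)
      = (if r < n then (1:ℝ) else -1) * Real.sin ((r : ℝ) * Real.pi / n) := by
  have hn0 : 0 < n := hn.pos
  have hn0' : (n : ℝ) ≠ 0 := by exact_mod_cast hn0.ne'
  have hsin_refl : ∀ s : ℕ, s ≤ n →
      Real.sin (((n - s : ℕ) : ℝ) * Real.pi / n) = Real.sin ((s : ℝ) * Real.pi / n) := by
    intro s hs
    have : (((n - s : ℕ) : ℝ) * Real.pi / n) = Real.pi - (s : ℝ) * Real.pi / n := by
      rw [Nat.cast_sub hs]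
      field_simp
    rw [this, Real.sin_pi_sub]
  unfold foldIdx
  by_cases hr : r < n
  · simp only [if_pos hr]
    split
    · simp
    · rw [hsin_refl r hr.le]; simp
  · simp only [if_neg hr]
    have hrn : n < r := by omega
    have h2n : 2 * n - r ≤ n := by omega
    have hsin2 : Real.sin (((2 * n - r : ℕ) : ℝ) * Real.pi / n)
        = - Real.sin ((r : ℝ) * Real.pi / n) := by
      have hcast : ((2 * n - r : ℕ) : ℝ) = 2 * n - r := by
        push_cast [Nat.cast_sub h2.le]; ring
      have : (((2 * n - r : ℕ) : ℝ) * Real.pi / n)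
          = 2 * Real.pi - (r : ℝ) * Real.pi / n := by
        rw [hcast]
        field_simp
      rw [this, Real.sin_two_pi_sub]
    split
    · rw [hsin2]; simp
    · rw [hsin_refl _ h2n, hsin2]; simp

/-- For odd primes `3 ≤ p < q` and `n = pq`, `m = ⌊n/2⌋`, there is an
improper identity: a tuple `(a_1,…,a_m) ∈ ℚ^m` with
`∑_{j=1}^m a_j sin (jπ/n) = 0` but `∑_{j=1}^m a_j ≠ 0`. -/
theorem improper_identity_two_primes (p q : ℕ) (hp : p.Prime) (hq : q.Prime)
    (hp3 : 3 ≤ p) (hpq : p < q) :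
    ∃ a : Fin (p * q / 2) → ℚ,
      (∑ j, (a j : ℝ) * Real.sin ((j.1 + 1) * Real.pi / (p * q : ℕ))) = 0 ∧
      (∑ j, a j) ≠ 0 := by
  have hq3 : 3 ≤ q := by omega
  have hpodd : Odd p := hp.odd_of_ne_two (by omega)
  have hqodd : Odd q := hq.odd_of_ne_two (by omega)
  set n := p * q with hn
  have hnodd : Odd n := hpodd.mul hqodd
  have hq0 : 0 < q := by omega
  have hp0 : 0 < p := by omega
  set E : ℕ → ℚ := fun k => if 1 + 2*q*k < n then 1 else -1 with hE
  set F : ℕ → ℕ := fun k => foldIdx n (1 + 2*q*k) with hF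
  have hrlt : ∀ k, k < p → 1 + 2*q*k < 2*n := by
    intro k hk
    have h1 : 2*q*(k+1) ≤ 2*q*p := Nat.mul_le_mul_left _ (by omega)
    have h2 : 2*q*(k+1) = 2*q*k + 2*q := by ring
    have h3 : 2*q*p = 2*n := by rw [hn]; ring
    omega
  have hrne : ∀ k, 1 + 2*q*k ≠ n := by
    intro k h
    have h2 : q ∣ 2*q*k := ⟨2*k, by ring⟩
    have h3 : q ∣ 1 + 2*q*k := by rw [h, hn]; exact ⟨p, by ring⟩
    have h4 : q ∣ 1 := (Nat.dvd_add_right h2).mp (by rwa [add_comm] at h3)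
    have := Nat.le_of_dvd one_pos h4
    omega
  have hFb : ∀ k, k < p → 1 ≤ F k ∧ F k ≤ n/2 := by
    intro k hk
    exact foldIdx_bounds n _ hnodd (by omega) (hrlt k hk) (hrne k)
  refine ⟨fun j => ∑ k ∈ Finset.range p, if (j : ℕ) + 1 = F k then E k else 0, ?_, ?_⟩
  · -- the sine identity
    have step1 : (∑ j : Fin (n/2), ((∑ k ∈ Finset.range p,
          if (j : ℕ) + 1 = F k then E k else 0 : ℚ) : ℝ)
            * Real.sin ((j.1 + 1) * Real.pi / (n : ℕ)))
        = ∑ k ∈ Finset.range p, ∑ j : Fin (n/2),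
            (if (j : ℕ) + 1 = F k then (E k : ℝ) else 0)
              * Real.sin ((j.1 + 1) * Real.pi / (n : ℕ)) := by
      rw [Finset.sum_comm]
      apply Finset.sum_congr rfl
      intro j _
      rw [← Finset.sum_mul]
      congr 1
      push_cast [apply_ite (fun x : ℚ => (x : ℝ))]
      rfl
    rw [step1]
    have step2 : ∀ k ∈ Finset.range p,
        (∑ j : Fin (n/2), (if (j : ℕ) + 1 = F k then (E k : ℝ) else 0)
            * Real.sin ((j.1 + 1) * Real.pi / (n : ℕ)))
          = Real.sin (((1 + 2*q*k : ℕ) : ℝ) * Real.pi / n) := by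
      intro k hk
      rw [Finset.mem_range] at hk
      obtain ⟨hF1, hF2⟩ := hFb k hk
      have hj0 : F k - 1 < n / 2 := by omega
      rw [Finset.sum_eq_single_of_mem (⟨F k - 1, hj0⟩ : Fin (n/2)) (Finset.mem_univ _)]
      · have hcond : ((⟨F k - 1, hj0⟩ : Fin (n/2)) : ℕ) + 1 = F k := by
          simp only []
          omega
        rw [if_pos hcond]
        have hcast : (((⟨F k - 1, hj0⟩ : Fin (n/2)) : ℕ) : ℝ) + 1 = (F k : ℝ) := by
          exact_mod_cast congrArg (Nat.cast (R := ℝ)) hcond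
        rw [hcast]
        have hsf := sin_foldIdx n (1 + 2*q*k) hnodd (by omega) (hrlt k hk) (hrne k)
        rw [hF] at *
        rw [hsf]
        rw [hE]
        simp only []
        split_ifs <;> push_cast <;> ring
      · intro b _ hb
        rw [if_neg, zero_mul]
        intro hcond
        apply hb
        apply Fin.ext
        simp only []
        omega
    rw [Finset.sum_congr rfl step2]
    have := sin_sum_zero p hp3 (Real.pi / n)
    rw [← this]
    apply Finset.sum_congr rfl
    intro k _
    congr 1
    have hpr : (p : ℝ) ≠ 0 := by positivity
    have hqr : (q : ℝ) ≠ 0 := by positivity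
    have hnr : (n : ℝ) = (p : ℝ) * q := by rw [hn]; push_cast; ring
    rw [hnr]
    push_cast
    field_simp
  · -- the coefficient sum is nonzero
    have step1 : (∑ j : Fin (n/2), ∑ k ∈ Finset.range p,
          if (j : ℕ) + 1 = F k then E k else 0)
        = ∑ k ∈ Finset.range p, E k := by
      rw [Finset.sum_comm]
      apply Finset.sum_congr rfl
      intro k hk
      rw [Finset.mem_range] at hk
      obtain ⟨hF1, hF2⟩ := hFb k hk
      have hj0 : F k - 1 < n / 2 := by omega
      rw [Finset.sum_eq_single_of_mem (⟨F k - 1, hj0⟩ : Fin (n/2)) (Finset.mem_univ _)]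
      · rw [if_pos]; simp only []; omega
      · intro b _ hb
        rw [if_neg]
        intro hcond
        apply hb
        apply Fin.ext
        simp only []
        omega
    rw [step1]
    have hiff : ∀ k, (1 + 2*q*k < n ↔ 2*k < p) := by
      intro k
      constructor
      · intro h
        by_contra hc
        obtain ⟨s, hs⟩ := hpodd
        have h1 : p + 1 ≤ 2*k := by omega
        have h2 : q*(p+1) ≤ q*(2*k) := Nat.mul_le_mul_left _ h1
        have h3 : q*(p+1) = n + q := by rw [hn]; ring
        have h4 : q*(2*k) = 2*q*k := by ring
        omega
      · intro h
        have h1 : q*(2*k+1) ≤ q*p := Nat.mul_le_mul_left _ (by omega)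
        have h2 : q*(2*k+1) = 2*q*k + q := by ring
        have h3 : q*p = n := by rw [hn]; ring
        omega
    have hEk : ∀ k, E k = if 2*k < p then (1:ℚ) else -1 := by
      intro k
      rw [hE]
      simp only []
      exact if_congr (hiff k) rfl rfl
    rw [Finset.sum_congr rfl (fun k _ => hEk k)]
    rw [Finset.sum_ite, Finset.sum_const, Finset.sum_const]
    have hfil : (Finset.range p).filter (fun k => 2*k < p) = Finset.range ((p+1)/2) := by
      ext k
      simp only [Finset.mem_filter, Finset.mem_range]
      omega
    have hfil2 : ((Finset.range p).filter (fun k => ¬ 2*k < p)).card = p - (p+1)/2 := by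
      rw [Finset.filter_not, Finset.card_sdiff_of_subset (Finset.filter_subset _ _)]
      rw [hfil]
      simp
    rw [hfil, hfil2, Finset.card_range]
    obtain ⟨s, hs⟩ := hpodd
    have e1 : (p+1)/2 = s + 1 := by omega
    have e2 : p - (p+1)/2 = s := by omega
    have e3 : p - (s+1) = s := by omega
    rw [e1, e3]
    simp only [nsmul_eq_mul, mul_one, mul_neg_one]
    push_cast
    intro hcontra
    have : ((s:ℚ)) + 1 - s = 0 := by linarith
    norm_num at this
end

section
/- Fix n ≥ 3 with m = ⌊n/2⌋, and let A = (a_1,…,a_m) and B = (b_1,…,b_m) be integer tuples, each satisfying Σ_j a_j sin(jπ/n) = 0, Σ_j a_j = 0, Σ_j b_j sin(jπ/n) = 0, Σ_j b_j = 0. Suppose B ↣ A, meaning: (a) for every 1 ≤ j ≤ m, a_j ≥ 0 or a_j ≥ b_j; and (b) for every divisor d of n, Σ_d(A) ≤ 0 or Σ_d(A) ≤ Σ_d(B), where Σ_d(X) = Σ_{j=1}^{⌊m/d⌋} x_{jd}. If M = [ℓ_1,…,ℓ_m] is an admissible multiset such that M + B (with multiplicities ℓ_j + b_j) is also an admissible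 multiset, then M + A (with multiplicities ℓ_j + a_j) is an admissible multiset. -/
/-- `Σ_d(X) = ∑_{j=1}^{⌊m/d⌋} x_{jd}` where `m = ⌊n/2⌋`, for a tuple `X`
given by a function `ℕ → ℤ` (positions `1,…,m`). -/
def sigmaD (n d : ℕ) (X : ℕ → ℤ) : ℤ :=
  ∑ j ∈ Finset.Icc 1 (n / 2 / d), X (j * d)

/-- A multiset `[ℓ_1,…,ℓ_m]` (given by its multiplicity function, supported
on `{1,…,m}` with `m = ⌊n/2⌋`) with `∑_j ℓ_j = n - 1` is admissible if
`Σ_d(ℓ) ≤ n - d` for every divisor `d` of `n`. -/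
def AdmissibleFn (n : ℕ) (L : ℕ → ℤ) : Prop :=
  (∀ j, L j ≠ 0 → 1 ≤ j ∧ j ≤ n / 2) ∧
  (∀ j, 0 ≤ L j) ∧
  (∑ j ∈ Finset.Icc 1 (n / 2), L j) = (n : ℤ) - 1 ∧
  ∀ d, d ∣ n → sigmaD n d L ≤ (n : ℤ) - d

/-- If `A`, `B` are integer identities with `B ↣ A` (i.e. for each `j`,
`a_j ≥ 0` or `a_j ≥ b_j`, and for each divisor `d` of `n`, `Σ_d(A) ≤ 0` or
`Σ_d(A) ≤ Σ_d(B)`), and `M`, `M + B` are admissible multisets, then `M + A`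
is an admissible multiset. -/
theorem eliminate_of_redto (n : ℕ) (hn : 3 ≤ n) (A B : ℕ → ℤ)
    (hAsupp : ∀ j, A j ≠ 0 → 1 ≤ j ∧ j ≤ n / 2)
    (hBsupp : ∀ j, B j ≠ 0 → 1 ≤ j ∧ j ≤ n / 2)
    (hA1 : (∑ j ∈ Finset.Icc 1 (n / 2), (A j : ℝ) * Real.sin (j * Real.pi / n)) = 0)
    (hA2 : (∑ j ∈ Finset.Icc 1 (n / 2), A j) = 0)
    (hB1 : (∑ j ∈ Finset.Icc 1 (n / 2), (B j : ℝ) * Real.sin (j * Real.pi / n)) = 0)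
    (hB2 : (∑ j ∈ Finset.Icc 1 (n / 2), B j) = 0)
    (hcoord : ∀ j, 1 ≤ j → j ≤ n / 2 → 0 ≤ A j ∨ B j ≤ A j)
    (hdiv : ∀ d, d ∣ n → sigmaD n d A ≤ 0 ∨ sigmaD n d A ≤ sigmaD n d B)
    (L : ℕ → ℤ) (hL : AdmissibleFn n L) (hLB : AdmissibleFn n (L + B)) :
    AdmissibleFn n (L + A) := by
  obtain ⟨hLs, hLnn, hLsum, hLd⟩ := hL
  obtain ⟨hBs, hBnn, hBsum, hBd⟩ := hLB
  have hadd : ∀ (X : ℕ → ℤ) (d : ℕ), sigmaD n d (L + X) = sigmaD n d L + sigmaD n d X := by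
    intro X d
    simp [sigmaD, Finset.sum_add_distrib]
  refine ⟨?_, ?_, ?_, ?_⟩
  · intro j hj
    by_cases h : L j = 0
    · exact hAsupp j (by simpa [h] using hj)
    · exact hLs j h
  · intro j
    by_cases hj : 1 ≤ j ∧ j ≤ n / 2
    · rcases hcoord j hj.1 hj.2 with h | h
      · have := hLnn j; simpa using add_nonneg this h
      · have := hBnn j
        simp only [Pi.add_apply] at this ⊢
        linarith
    · have hA0 : A j = 0 := by
        by_contra h; exact hj (hAsupp j h)
      simpa [hA0] using hLnn j
  · simp only [Pi.add_apply, Finset.sum_add_distrib, hA2, hLsum, add_zero]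
  · intro d hd
    rw [hadd]
    rcases hdiv d hd with h | h
    · have := hLd d hd; linarith
    · have := hBd d hd
      rw [hadd] at this
      linarith
end

section
/- sin(π/15) − sin(3π/15) − sin(4π/15) − sin(5π/15) + 2 sin(7π/15) = 0 and sin(2π/15) − 2 sin(4π/15) − sin(5π/15) + sin(6π/15) + sin(7π/15) = 0; moreover the tuples (1,0,−1,−1,−1,0,2) and (0,1,0,−2,−1,1,1) are linearly independent over ℚ, and every (a_1,…,a_7) ∈ ℚ^7 with Σ_{j=1}^7 a_j sin(jπ/15) = 0 and Σ_{j=1}^7 a_j = 0 is a ℚ-linear combination of these two tuples. -/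
open Complex Polynomial

noncomputable def zeta15 : ℂ := Complex.exp (Real.pi * Complex.I / 15)

lemma zeta15_prim : IsPrimitiveRoot zeta15 30 := by
  have h := Complex.isPrimitiveRoot_exp 30 (by norm_num)
  have : (2 * (Real.pi : ℂ) * Complex.I / (30 : ℕ)) = Real.pi * Complex.I / 15 := by
    push_cast; ring
  rwa [this] at h

lemma zeta15_pow (m : ℕ) : zeta15 ^ m = Complex.exp (m * Real.pi * Complex.I / 15) := by
  rw [zeta15, ← Complex.exp_nat_mul]; ring_nf

lemma zeta15_phi : zeta15 ^ 8 + zeta15 ^ 7 - zeta15 ^ 5 - zeta15 ^ 4 - zeta15 ^ 3 +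
    zeta15 + 1 = 0 := by
  set z := zeta15 with hz
  have h15 : z ^ 15 = -1 := by
    rw [hz, zeta15_pow 15]
    rw [show ((15 : ℕ) : ℂ) * Real.pi * Complex.I / 15 = Real.pi * Complex.I by push_cast; ring]
    exact Complex.exp_pi_mul_I
  have h5 : z ^ 5 + 1 ≠ 0 := by
    intro h
    have h10 : z ^ 10 = 1 := by linear_combination (z ^ 5 - 1) * h
    have := zeta15_prim.dvd_of_pow_eq_one 10 h10
    omega
  have h10 : z ^ 10 - z ^ 5 + 1 = 0 := by
    rcases mul_eq_zero.mp (show (z ^ 5 + 1) * (z ^ 10 - z ^ 5 + 1) = 0 by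
      linear_combination h15) with h | h
    · exact absurd h h5
    · exact h
  have h6 : z ^ 2 - z + 1 ≠ 0 := by
    intro h
    have h6' : z ^ 6 = 1 := by linear_combination (z ^ 4 + z ^ 3 - z - 1) * h
    have := zeta15_prim.dvd_of_pow_eq_one 6 h6'
    omega
  rcases mul_eq_zero.mp (show (z ^ 2 - z + 1) *
      (z ^ 8 + z ^ 7 - z ^ 5 - z ^ 4 - z ^ 3 + z + 1) = 0 by linear_combination h10) with h | h
  · exact absurd h h6
  · exact h

lemma zeta15_indep (c : Fin 8 → ℚ) (h : ∑ k, (c k : ℂ) * zeta15 ^ (k : ℕ) = 0) :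
    ∀ k, c k = 0 := by
  by_contra hc
  push_neg at hc
  obtain ⟨k, hk⟩ := hc
  set p : ℚ[X] := ∑ k : Fin 8, Polynomial.C (c k) * X ^ (k : ℕ) with hp
  have hpne : p ≠ 0 := by
    intro h0
    apply hk
    have := congrArg (fun q => Polynomial.coeff q (k : ℕ)) h0
    simpa [hp, Polynomial.finset_sum_coeff, Polynomial.coeff_C_mul, Polynomial.coeff_X_pow,
      Fin.val_eq_val] using this
  have haev : Polynomial.aeval zeta15 p = 0 := by
    rw [hp, ← h]
    simp [eq_ratCast]
  have hd := minpoly.degree_le_of_ne_zero ℚ zeta15 hpne haev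
  have hmin : minpoly ℚ zeta15 = Polynomial.cyclotomic 30 ℚ :=
    (Polynomial.cyclotomic_eq_minpoly_rat zeta15_prim (by norm_num)).symm
  have hdeg : (minpoly ℚ zeta15).degree = 8 := by
    rw [hmin, Polynomial.degree_cyclotomic]
    norm_num [Nat.totient]
    decide
  have hple : p.degree ≤ 7 := by
    rw [hp]
    refine (Polynomial.degree_sum_le _ _).trans ?_
    refine Finset.sup_le fun i _ => ?_
    refine (Polynomial.degree_C_mul_X_pow_le _ _).trans ?_
    exact_mod_cast Nat.cast_le.mpr (by omega : (i : ℕ) ≤ 7)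
  rw [hdeg] at hd
  have := hd.trans hple
  norm_num at this

lemma sin_eq_zeta15 (m : ℕ) (hm : m ≤ 30) (x : ℝ) (hx : x = m * Real.pi / 15) :
    ((Real.sin x : ℝ) : ℂ) = (zeta15 ^ (30 - m) - zeta15 ^ m) * Complex.I / 2 := by
  subst hx
  rw [Complex.ofReal_sin, zeta15_pow, zeta15_pow]
  rw [Complex.sin]
  have h1 : ((30 - m : ℕ) : ℂ) * Real.pi * Complex.I / 15 =
      2 * Real.pi * Complex.I + -(((m : ℝ) * Real.pi / 15 : ℝ) : ℂ) * Complex.I := by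
    push_cast [hm]
    ring
  have h2 : ((m : ℕ) : ℂ) * Real.pi * Complex.I / 15 =
      (((m : ℝ) * Real.pi / 15 : ℝ) : ℂ) * Complex.I := by
    push_cast; ring
  rw [h1, h2, Complex.exp_add, Complex.exp_two_pi_mul_I, one_mul]

lemma zeta15_indep8 (c0 c1 c2 c3 c4 c5 c6 c7 : ℚ)
    (h : (c0 : ℂ) + c1 * zeta15 + c2 * zeta15 ^ 2 + c3 * zeta15 ^ 3 + c4 * zeta15 ^ 4 +
      c5 * zeta15 ^ 5 + c6 * zeta15 ^ 6 + c7 * zeta15 ^ 7 = 0) :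
    c0 = 0 ∧ c1 = 0 ∧ c2 = 0 ∧ c3 = 0 ∧ c4 = 0 ∧ c5 = 0 ∧ c6 = 0 ∧ c7 = 0 := by
  have hk := zeta15_indep ![c0, c1, c2, c3, c4, c5, c6, c7] (by
    simp only [Fin.sum_univ_succ, Fin.sum_univ_zero, Matrix.cons_val_zero,
      Matrix.cons_val_succ, Fin.val_zero, Fin.val_succ]
    push_cast
    linear_combination h)
  exact ⟨hk 0, hk 1, hk 2, hk 3, hk 4, hk 5, hk 6, hk 7⟩

/-- For `n = 15`, the tuples `(1,0,-1,-1,-1,0,2)` and `(0,1,0,-2,-1,1,1)` are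
identities, they are linearly independent over `ℚ`, and every identity
`(a_1,…,a_7) ∈ ℚ^7` (i.e. `∑_{j=1}^7 a_j sin (jπ/15) = 0` and
`∑_{j=1}^7 a_j = 0`) is a `ℚ`-linear combination of them. -/
theorem fifteen_identities :
    (Real.sin (Real.pi / 15) - Real.sin (3 * Real.pi / 15) -
        Real.sin (4 * Real.pi / 15) - Real.sin (5 * Real.pi / 15) +
        2 * Real.sin (7 * Real.pi / 15) = 0) ∧
    (Real.sin (2 * Real.pi / 15) - 2 * Real.sin (4 * Real.pi / 15) -
        Real.sin (5 * Real.pi / 15) + Real.sin (6 * Real.pi / 15) +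
        Real.sin (7 * Real.pi / 15) = 0) ∧
    LinearIndependent ℚ
      ![(![1, 0, -1, -1, -1, 0, 2] : Fin 7 → ℚ),
        (![0, 1, 0, -2, -1, 1, 1] : Fin 7 → ℚ)] ∧
    ∀ a : Fin 7 → ℚ,
      (∑ j, (a j : ℝ) * Real.sin ((j.1 + 1) * Real.pi / 15)) = 0 →
      (∑ j, a j) = 0 →
      ∃ c d : ℚ, a = c • ![1, 0, -1, -1, -1, 0, 2] + d • ![0, 1, 0, -2, -1, 1, 1] := by
  have s1 := sin_eq_zeta15 1 (by norm_num) (Real.pi / 15) (by push_cast; ring)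
  have s2 := sin_eq_zeta15 2 (by norm_num) (2 * Real.pi / 15) (by push_cast; ring)
  have s3 := sin_eq_zeta15 3 (by norm_num) (3 * Real.pi / 15) (by push_cast; ring)
  have s4 := sin_eq_zeta15 4 (by norm_num) (4 * Real.pi / 15) (by push_cast; ring)
  have s5 := sin_eq_zeta15 5 (by norm_num) (5 * Real.pi / 15) (by push_cast; ring)
  have s6 := sin_eq_zeta15 6 (by norm_num) (6 * Real.pi / 15) (by push_cast; ring)
  have s7 := sin_eq_zeta15 7 (by norm_num) (7 * Real.pi / 15) (by push_cast; ring)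
  norm_num at s1 s2 s3 s4 s5 s6 s7
  refine ⟨?_, ?_, ?_, ?_⟩
  · have key : ((Real.sin (Real.pi / 15) - Real.sin (3 * Real.pi / 15) -
        Real.sin (4 * Real.pi / 15) - Real.sin (5 * Real.pi / 15) +
        2 * Real.sin (7 * Real.pi / 15) : ℝ) : ℂ) = 0 := by
      push_cast
      rw [s1, s3, s4, s5, s7]
      linear_combination (Complex.I / 2 * (zeta15^21 - zeta15^20 - zeta15^17 + zeta15^16 - 2*zeta15^14 + 2*zeta15^13 - zeta15^12 + zeta15^10 - 2*zeta15^9 + 2*zeta15^8 - zeta15^6 + zeta15^5 + zeta15^2 - zeta15)) * zeta15_phi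
    exact_mod_cast key
  · have key : ((Real.sin (2 * Real.pi / 15) - 2 * Real.sin (4 * Real.pi / 15) -
        Real.sin (5 * Real.pi / 15) + Real.sin (6 * Real.pi / 15) +
        Real.sin (7 * Real.pi / 15) : ℝ) : ℂ) = 0 := by
      push_cast
      rw [s2, s4, s5, s6, s7]
      linear_combination (Complex.I / 2 * (zeta15^20 - zeta15^19 - zeta15^18 + zeta15^17 - zeta15^14 + zeta15^12 - zeta15^10 + zeta15^8 - zeta15^5 + zeta15^4 + zeta15^3 - zeta15^2)) * zeta15_phi
    exact_mod_cast key
  · rw [linearIndependent_fin2]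
    constructor
    · intro h
      have := congrFun h 1
      norm_num at this
    · intro q h
      have := congrFun h 0
      norm_num at this
  · intro a ha hsum
    rw [Fin.sum_univ_seven] at hsum
    have haC := congrArg (fun x : ℝ => (x : ℂ)) ha
    push_cast [Fin.sum_univ_seven, show ((0 : Fin 7) : ℕ) = 0 from rfl,
      show ((1 : Fin 7) : ℕ) = 1 from rfl, show ((2 : Fin 7) : ℕ) = 2 from rfl,
      show ((3 : Fin 7) : ℕ) = 3 from rfl, show ((4 : Fin 7) : ℕ) = 4 from rfl,
      show ((5 : Fin 7) : ℕ) = 5 from rfl, show ((6 : Fin 7) : ℕ) = 6 from rfl] at haC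
    norm_num at haC
    rw [s1, s2, s3, s4, s5, s6, s7] at haC
    have hP : ((a 0:ℂ)*zeta15^29 + (a 1:ℂ)*zeta15^28 + (a 2:ℂ)*zeta15^27 + (a 3:ℂ)*zeta15^26 + (a 4:ℂ)*zeta15^25 + (a 5:ℂ)*zeta15^24 + (a 6:ℂ)*zeta15^23 - (a 6:ℂ)*zeta15^7 - (a 5:ℂ)*zeta15^6 - (a 4:ℂ)*zeta15^5 - (a 3:ℂ)*zeta15^4 - (a 2:ℂ)*zeta15^3 - (a 1:ℂ)*zeta15^2 - (a 0:ℂ)*zeta15) = 0 := by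
      linear_combination (-2 * Complex.I) * haC + ((a 0:ℂ)*zeta15^29 + (a 1:ℂ)*zeta15^28 + (a 2:ℂ)*zeta15^27 + (a 3:ℂ)*zeta15^26 + (a 4:ℂ)*zeta15^25 + (a 5:ℂ)*zeta15^24 + (a 6:ℂ)*zeta15^23 - (a 6:ℂ)*zeta15^7 - (a 5:ℂ)*zeta15^6 - (a 4:ℂ)*zeta15^5 - (a 3:ℂ)*zeta15^4 - (a 2:ℂ)*zeta15^3 - (a 1:ℂ)*zeta15^2 - (a 0:ℂ)*zeta15) * Complex.I_sq
    obtain ⟨e0, e1, e2, e3, e4, e5, e6, e7⟩ := zeta15_indep8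
      (-a 0 + a 1 + a 4 - a 5 + a 6) (-a 0 + a 1 + a 3 + a 6) (a 0 - a 1 + a 2 + a 5)
      (a 0 - a 2 + a 5 - a 6) (a 0 - a 1 - a 3 - a 6) (-a 1 - 2 * a 4 - a 6)
      (-a 0 - a 3 - 2 * a 5) (-a 0 + a 1 - a 2 - a 5) (by
        push_cast
        linear_combination hP - ((a 0:ℂ)*zeta15^21 - (a 0:ℂ)*zeta15^20 + (a 1:ℂ)*zeta15^20 + (a 0:ℂ)*zeta15^19 - (a 1:ℂ)*zeta15^19 + (a 2:ℂ)*zeta15^19 + (a 1:ℂ)*zeta15^18 - (a 2:ℂ)*zeta15^18 + (a 3:ℂ)*zeta15^18 + (a 2:ℂ)*zeta15^17 - (a 3:ℂ)*zeta15^17 + (a 4:ℂ)*zeta15^17 + (a 0:ℂ)*zeta15^16 + (a 3:ℂ)*zeta15^16 - (a 4:ℂ)*zeta15^16 + (a 5:ℂ)*zeta15^16 - (a 0:ℂ)*zeta15^15 + (a 1:ℂ)*zeta15^15 + (a 4:ℂ)*zeta15^15 - (a 5:ℂ)*zeta15^15 + (a 6:ℂ)*zeta15^15 + (a 0:ℂ)*zeta15^14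 - (a 1:ℂ)*zeta15^14 + (a 2:ℂ)*zeta15^14 + (a 5:ℂ)*zeta15^14 - (a 6:ℂ)*zeta15^14 + (a 1:ℂ)*zeta15^13 - (a 2:ℂ)*zeta15^13 + (a 3:ℂ)*zeta15^13 + (a 6:ℂ)*zeta15^13 + (a 2:ℂ)*zeta15^12 - (a 3:ℂ)*zeta15^12 + (a 4:ℂ)*zeta15^12 + (a 3:ℂ)*zeta15^11 - (a 4:ℂ)*zeta15^11 + (a 5:ℂ)*zeta15^11 + (a 4:ℂ)*zeta15^10 - (a 5:ℂ)*zeta15^10 + (a 6:ℂ)*zeta15^10 + (a 5:ℂ)*zeta15^9 - (a 6:ℂ)*zeta15^9 + (a 6:ℂ)*zeta15^8 - (a 0:ℂ)*zeta15^6 + (a 0:ℂ)*zeta15^5 - (a 1:ℂ)*zeta15^5 - (a 0:ℂ)*zeta15^4 + (a 1:ℂ)*zeta15^4 - (a 2:ℂ)*zeta15^4 - (a 1:ℂ)*zeta15^3 + (a 2:ℂ)*zeta15^3 - (a 3:ℂ)*zeta15^3 - (a 2:ℂ)*zeta15^2 + (a 3:ℂ)*zeta15^2 - (a 4:ℂ)*zeta15^2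 - (a 0:ℂ)*zeta15 - (a 3:ℂ)*zeta15 + (a 4:ℂ)*zeta15 - (a 5:ℂ)*zeta15 + (a 0:ℂ) - (a 1:ℂ) - (a 4:ℂ) + (a 5:ℂ) - (a 6:ℂ)) * zeta15_phi)
    refine ⟨a 0, a 1, ?_⟩
    funext i
    fin_cases i
    · show a 0 = a 0 * 1 + a 1 * 0; linarith
    · show a 1 = a 0 * 0 + a 1 * 1; linarith
    · show a 2 = a 0 * (-1) + a 1 * 0; linarith
    · show a 3 = a 0 * (-1) + a 1 * (-2); linarith
    · show a 4 = a 0 * (-1) + a 1 * (-1); linarith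
    · show a 5 = a 0 * 0 + a 1 * 1; linarith
    · show a 6 = a 0 * 2 + a 1 * 1; linarith
end
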